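/- arXiv:1405.3366 — 9 statements merged into one kernel-verified Lean document; each statement's English description precedes it below -/
import Mathlib

section
/- Let ξ = (Γ, B, ν̄, c₁,…,c_b, c₁′,…,c_b′, α₁,…,α_k) be theta data and assume moreover that c₁,…,c_b and c₁′,…,c_b′ all lie in Γ. Then every ν ∈ ν̄ + Γ is uniquely written as ν = μ + Σ_{i=1}^{b} m_i c_i′ where μ ∈ ν̄ + Γ, m₁,…,m_b ∈ ℤ, and B(c_i,μ)/B(c_i,c_i′) ∈ [0,1) for every 1 ≤ i ≤ b. -/
open scoped BigOperators

/-- The ℚ-bilinear pairing on `Fin n → ℚ` induced by an integer matrix,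
representing a symmetric bilinear form `B : Γ × Γ → ℤ` on the finitely generated
free abelian group `Γ = ℤ^n`, extended ℚ-bilinearly to `Γ ⊗ ℚ = ℚ^n`. -/
def intPair {n : ℕ} (M : Matrix (Fin n) (Fin n) ℤ) (x y : Fin n → ℚ) : ℚ :=
  ∑ i, ∑ j, (M i j : ℚ) * x i * y j

/-- The sign function: `sgn x = x / |x|` for `x ≠ 0` and `sgn 0 = 0`. -/
def sgn (x : ℚ) : ℚ := if 0 < x then 1 else if x < 0 then -1 else 0

/-- Raw theta data `ξ = (Γ, B, ν̄, c₁,…,c_b, c₁′,…,c_b′, α₁,…,α_k)`, with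
`Γ = ℤ^n` and `B` given by the integer matrix `M`. -/
structure ThetaData where
  n : ℕ
  b : ℕ
  k : ℕ
  M : Matrix (Fin n) (Fin n) ℤ
  c : Fin b → Fin n → ℚ
  c' : Fin b → Fin n → ℚ
  nubar : Fin n → ℚ
  alpha : Fin k → Fin n → ℚ

namespace ThetaData

/-- The element `ν̄ + g` of the coset `ν̄ + Γ ⊆ Γ ⊗ ℚ`. -/
def nu (ξ : ThetaData) (g : Fin ξ.n → ℤ) : Fin ξ.n → ℚ :=
  ξ.nubar + fun t => (g t : ℚ)

/-- Conditions (i)–(v) on theta data: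
(i) `B` is a non-degenerate symmetric bilinear form whose real (equivalently,
rational) extension has signature `(a, b)` with `a = n - b ≥ b` (expressed by
non-degeneracy together with a positive definite subspace of dimension `n - b`,
and the negative definite `b`-dimensional subspace from (ii));
(ii) `c₁,…,c_b` span a `b`-dimensional negative definite subspace;
(iii) the orthogonality conditions on `c_i, c_j′`;
(iv) `B(c_i′, ν) ≠ 0` for all `ν ∈ ν̄ + Γ`;
(v) is automatic. -/
def IsThetaData (ξ : ThetaData) : Prop :=
  2 * ξ.b ≤ ξ.n ∧
  ξ.M.IsSymm ∧
  (∀ x : Fin ξ.n → ℚ, (∀ y, intPair ξ.M x y = 0) → x = 0) ∧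
  (∃ P : Submodule ℚ (Fin ξ.n → ℚ), Module.finrank ℚ P = ξ.n - ξ.b ∧
    ∀ v ∈ P, v ≠ 0 → 0 < intPair ξ.M v v) ∧
  Module.finrank ℚ (Submodule.span ℚ (Set.range ξ.c)) = ξ.b ∧
  (∀ v ∈ Submodule.span ℚ (Set.range ξ.c), v ≠ 0 → intPair ξ.M v v < 0) ∧
  (∀ i j, i ≠ j → intPair ξ.M (ξ.c i) (ξ.c' j) = 0) ∧
  (∀ i j, intPair ξ.M (ξ.c' i) (ξ.c' j) = 0) ∧
  (∀ i, intPair ξ.M (ξ.c i) (ξ.c' i) < 0) ∧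
  (∀ i (g : Fin ξ.n → ℤ), intPair ξ.M (ξ.c' i) (ξ.nu g) ≠ 0)

/-- The term of the theta series `Θ_ξ` indexed by `ν = ν̄ + g ∈ ν̄ + Γ`:
`∏_{i=1}^{b} (sgn(B(c_i,ν)) − sgn(B(c_i′,ν))) ∏_{j=1}^{k} B(α_j,ν) e^{2πi Q(ν) τ}`,
where `Q(ν) = B(ν,ν)/2`. -/
noncomputable def term (ξ : ThetaData) (τ : ℂ) (g : Fin ξ.n → ℤ) : ℂ :=
  (((∏ i, (sgn (intPair ξ.M (ξ.c i) (ξ.nu g)) - sgn (intPair ξ.M (ξ.c' i) (ξ.nu g)))) *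
      ∏ j, intPair ξ.M (ξ.alpha j) (ξ.nu g) : ℚ) : ℂ) *
    Complex.exp (2 * (Real.pi : ℂ) * Complex.I *
      ((intPair ξ.M (ξ.nu g) (ξ.nu g) / 2 : ℚ) : ℂ) * τ)

/-- The theta series `Θ_ξ(τ)`. -/
noncomputable def Theta (ξ : ThetaData) (τ : ℂ) : ℂ :=
  ∑' g : Fin ξ.n → ℤ, ξ.term τ g

end ThetaData


/-- `intPair M x` as a linear map in the second argument. -/
def pairR {n : ℕ} (M : Matrix (Fin n) (Fin n) ℤ) (x : Fin n → ℚ) :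
    (Fin n → ℚ) →ₗ[ℚ] ℚ where
  toFun y := intPair M x y
  map_add' y z := by
    simp only [intPair, Pi.add_apply, mul_add, Finset.sum_add_distrib]
  map_smul' q y := by
    simp only [intPair, Pi.smul_apply, smul_eq_mul, RingHom.id_apply, Finset.mul_sum]
    exact Finset.sum_congr rfl fun i _ => Finset.sum_congr rfl fun j _ => by ring

/-- If moreover all `c_i` and `c_i′` lie in `Γ`, then every
`ν ∈ ν̄ + Γ` is uniquely written as `ν = μ + Σ m_i c_i′` with `μ ∈ ν̄ + Γ`,
`m_i ∈ ℤ` and `B(c_i, μ)/B(c_i, c_i′) ∈ [0, 1)` for all `i`. -/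
theorem theta_unique_decomposition (ξ : ThetaData) (hξ : ξ.IsThetaData)
    (hc : ∀ i, ∃ v : Fin ξ.n → ℤ, ξ.c i = fun t => (v t : ℚ))
    (hc' : ∀ i, ∃ v : Fin ξ.n → ℤ, ξ.c' i = fun t => (v t : ℚ))
    (g : Fin ξ.n → ℤ) :
    ∃! p : (Fin ξ.n → ℤ) × (Fin ξ.b → ℤ),
      ξ.nu g = ξ.nu p.1 + ∑ i, (p.2 i : ℚ) • ξ.c' i ∧
      ∀ i, intPair ξ.M (ξ.c i) (ξ.nu p.1) / intPair ξ.M (ξ.c i) (ξ.c' i)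
        ∈ Set.Ico (0 : ℚ) 1 := by
  obtain ⟨h1, h2, h3, h4, h5, h6, horth, h8, hneg, h10⟩ := hξ
  set D : Fin ξ.b → ℚ := fun i => intPair ξ.M (ξ.c i) (ξ.c' i) with hDdef
  have hD : ∀ i, D i ≠ 0 := fun i => (hneg i).ne
  set r : Fin ξ.b → ℚ := fun i => intPair ξ.M (ξ.c i) (ξ.nu g) / D i with hrdef
  -- key computation
  have key : ∀ (g₂ : Fin ξ.n → ℤ) (m₂ : Fin ξ.b → ℤ),
      ξ.nu g = ξ.nu g₂ + ∑ i, (m₂ i : ℚ) • ξ.c' i →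
      ∀ i, intPair ξ.M (ξ.c i) (ξ.nu g₂)
        = intPair ξ.M (ξ.c i) (ξ.nu g) - (m₂ i : ℚ) * D i := by
    intro g₂ m₂ heq i
    have hsub : ξ.nu g₂ = ξ.nu g - ∑ j, (m₂ j : ℚ) • ξ.c' j :=
      eq_sub_of_add_eq heq.symm
    have : pairR ξ.M (ξ.c i) (ξ.nu g₂)
        = pairR ξ.M (ξ.c i) (ξ.nu g) - ∑ j, (m₂ j : ℚ) * pairR ξ.M (ξ.c i) (ξ.c' j) := by
      rw [hsub, map_sub, map_sum]
      simp only [map_smul, smul_eq_mul]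
    have hsum : ∑ j, (m₂ j : ℚ) * pairR ξ.M (ξ.c i) (ξ.c' j) = (m₂ i : ℚ) * D i := by
      rw [Finset.sum_eq_single i]
      · rfl
      · intro j _ hj
        have := horth i j (Ne.symm hj)
        show (m₂ j : ℚ) * intPair ξ.M (ξ.c i) (ξ.c' j) = 0
        rw [this, mul_zero]
      · intro h; exact absurd (Finset.mem_univ i) h
    rw [hsum] at this
    exact this
  -- the floor condition characterization
  have char : ∀ (g₂ : Fin ξ.n → ℤ) (m₂ : Fin ξ.b → ℤ),
      ξ.nu g = ξ.nu g₂ + ∑ i, (m₂ i : ℚ) • ξ.c' i →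
      ∀ i, intPair ξ.M (ξ.c i) (ξ.nu g₂) / D i = r i - (m₂ i : ℚ) := by
    intro g₂ m₂ heq i
    rw [key g₂ m₂ heq i, sub_div, mul_div_assoc, div_self (hD i), mul_one, hrdef]
  -- existence witness
  set m : Fin ξ.b → ℤ := fun i => ⌊r i⌋ with hmdef
  choose v' hv' using hc'
  set g' : Fin ξ.n → ℤ := fun t => g t - ∑ i, m i * v' i t with hg'def
  have heq' : ξ.nu g = ξ.nu g' + ∑ i, (m i : ℚ) • ξ.c' i := by
    funext t
    simp only [ThetaData.nu, Pi.add_apply, Finset.sum_apply, Pi.smul_apply, smul_eq_mul,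
      hg'def, hv']
    push_cast
    ring
  refine ⟨(g', m), ⟨heq', fun i => ?_⟩, ?_⟩
  · rw [show intPair ξ.M (ξ.c i) (ξ.nu g') / intPair ξ.M (ξ.c i) (ξ.c' i)
        = intPair ξ.M (ξ.c i) (ξ.nu g') / D i from rfl, char g' m heq' i]
    constructor
    · have := Int.floor_le (r i); simp only [hmdef]; linarith
    · have := Int.lt_floor_add_one (r i); simp only [hmdef]; linarith
  · rintro ⟨g₂, m₂⟩ ⟨heq₂, hIco₂⟩
    have hm₂ : m₂ = m := by
      funext i
      have h := char g₂ m₂ heq₂ i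
      have hI := hIco₂ i
      rw [show intPair ξ.M (ξ.c i) (ξ.nu g₂) / intPair ξ.M (ξ.c i) (ξ.c' i)
        = intPair ξ.M (ξ.c i) (ξ.nu g₂) / D i from rfl, h] at hI
      obtain ⟨h0, h1⟩ := hI
      have : ⌊r i⌋ = m₂ i := by
        rw [Int.floor_eq_iff]
        constructor
        · linarith
        · push_cast; linarith
      simp [hmdef, this]
    subst hm₂
    have hnu : ξ.nu g₂ = ξ.nu g' := by
      have := heq₂.symm.trans heq'
      exact add_right_cancel this
    have hg : g₂ = g' := by
      funext t
      have := congrFun hnu t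
      simp only [ThetaData.nu, Pi.add_apply, add_right_inj] at this
      exact_mod_cast this
    rw [hg]
end

section
/- Let ξ = (Γ, B, ν̄, c₁,…,c_b, c₁′,…,c_b′, α₁,…,α_k) be theta data with c₁,…,c_b, c₁′,…,c_b′ ∈ Γ, and let Γ′ = {v ∈ Γ : B(v,c_i) = 0 for all 1 ≤ i ≤ b}. Then there exist finitely many elements μ₁,…,μ_p ∈ Γ such that every μ ∈ ν̄ + Γ satisfying B(c_i,μ)/B(c_i,c_i′) ∈ [0,1) for all 1 ≤ i ≤ b can be written as μ = ν̄ + μ_e + μ′ for some 1 ≤ e ≤ p and some μ′ ∈ Γ′. -/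
open scoped BigOperators

lemma intPair_add_right {n : ℕ} (M : Matrix (Fin n) (Fin n) ℤ) (x y z : Fin n → ℚ) :
    intPair M x (y + z) = intPair M x y + intPair M x z := by
  unfold intPair
  rw [← Finset.sum_add_distrib]
  refine Finset.sum_congr rfl fun i _ => ?_
  rw [← Finset.sum_add_distrib]
  refine Finset.sum_congr rfl fun j _ => ?_
  simp [Pi.add_apply]; ring

lemma intPair_symm {n : ℕ} {M : Matrix (Fin n) (Fin n) ℤ} (hM : M.IsSymm)
    (x y : Fin n → ℚ) : intPair M x y = intPair M y x := by
  unfold intPair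
  rw [Finset.sum_comm]
  refine Finset.sum_congr rfl fun i _ => Finset.sum_congr rfl fun j _ => ?_
  have h : M j i = M i j := hM.apply i j
  rw [h]; ring

/-- With `c_i, c_i′ ∈ Γ` and `Γ′ = {v ∈ Γ : B(v, c_i) = 0 ∀ i}`,
there are finitely many `μ₁,…,μ_p ∈ Γ` such that every `μ ∈ ν̄ + Γ` with
`B(c_i,μ)/B(c_i,c_i′) ∈ [0,1)` for all `i` is of the form `μ = ν̄ + μ_e + μ′`
with `1 ≤ e ≤ p` and `μ′ ∈ Γ′`. -/
theorem theta_finitely_many_residues (ξ : ThetaData) (hξ : ξ.IsThetaData)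
    (hc : ∀ i, ∃ v : Fin ξ.n → ℤ, ξ.c i = fun t => (v t : ℚ))
    (hc' : ∀ i, ∃ v : Fin ξ.n → ℤ, ξ.c' i = fun t => (v t : ℚ)) :
    ∃ (p : ℕ) (μs : Fin p → (Fin ξ.n → ℤ)),
      ∀ g : Fin ξ.n → ℤ,
        (∀ i, intPair ξ.M (ξ.c i) (ξ.nu g) / intPair ξ.M (ξ.c i) (ξ.c' i)
          ∈ Set.Ico (0 : ℚ) 1) →
        ∃ (e : Fin p) (μ' : Fin ξ.n → ℤ),
          (∀ i, intPair ξ.M (fun t => (μ' t : ℚ)) (ξ.c i) = 0) ∧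
          ξ.nu g = ξ.nubar + (fun t => ((μs e) t : ℚ)) + fun t => (μ' t : ℚ) := by
  classical
  obtain ⟨-, hMsymm, -, -, -, -, -, -, hneg, -⟩ := hξ
  -- integer coordinates of the c i
  choose v hv using hc
  -- the integer pairing of c i against an integral vector
  set m : (Fin ξ.n → ℤ) → Fin ξ.b → ℤ :=
    fun g i => ∑ t, ∑ j, ξ.M t j * v i t * g j with hm_def
  have hm : ∀ (g : Fin ξ.n → ℤ) i,
      intPair ξ.M (ξ.c i) (fun t => (g t : ℚ)) = (m g i : ℚ) := by
    intro g i
    rw [hv i]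
    simp only [hm_def, intPair]
    push_cast
    rfl
  set β : Fin ξ.b → ℚ := fun i => intPair ξ.M (ξ.c i) ξ.nubar with hβ
  set d : Fin ξ.b → ℚ := fun i => intPair ξ.M (ξ.c i) (ξ.c' i) with hd
  set lo : Fin ξ.b → ℤ := fun i => ⌈d i - β i⌉ with hlo
  set hi : Fin ξ.b → ℤ := fun i => ⌊-β i⌋ with hhi
  set S : Finset (Fin ξ.b → ℤ) :=
    Fintype.piFinset (fun i => Finset.Icc (lo i) (hi i)) with hS
  -- a representative for each value of m
  set rep : (Fin ξ.b → ℤ) → (Fin ξ.n → ℤ) :=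
    fun w => if h : ∃ g, m g = w then h.choose else 0 with hrep
  refine ⟨S.card, fun e => rep (S.equivFin.symm e : _), ?_⟩
  intro g hg
  -- key computation: B(c i, ν g) = β i + m g i
  have hpair : ∀ i, intPair ξ.M (ξ.c i) (ξ.nu g) = β i + (m g i : ℚ) := by
    intro i
    rw [ThetaData.nu, intPair_add_right, ← hm g i, hβ]
  -- membership of m g in S
  have hmem : m g ∈ S := by
    rw [hS, Fintype.mem_piFinset]
    intro i
    have hdneg : d i < 0 := hneg i
    obtain ⟨h0, h1⟩ := hg i
    set ψ : ℚ := intPair ξ.M (ξ.c i) (ξ.nu g) with hψ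
    have hψd : (ψ / d i) * d i = ψ := div_mul_cancel₀ _ hdneg.ne
    have hψle : ψ ≤ 0 := by
      rw [← hψd]
      exact mul_nonpos_of_nonneg_of_nonpos h0 hdneg.le
    have hdlt : d i < ψ := by
      have := mul_lt_mul_of_neg_right h1 hdneg
      rwa [hψd, one_mul] at this
    rw [hψ, hpair i] at hψle hdlt
    rw [Finset.mem_Icc]
    constructor
    · exact Int.ceil_le.mpr (by linarith)
    · exact Int.le_floor.mpr (by push_cast; linarith)
  -- the chosen representative
  refine ⟨S.equivFin ⟨m g, hmem⟩, g - rep (m g), ?_, ?_⟩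
  all_goals
    have hcoe : ((S.equivFin.symm (S.equivFin ⟨m g, hmem⟩)) : Fin ξ.b → ℤ) = m g := by
      rw [Equiv.symm_apply_apply]
  · -- orthogonality
    intro i
    have hex : ∃ g', m g' = m g := ⟨g, rfl⟩
    have hg0 : m (rep (m g)) = m g := by
      rw [hrep]; simp only [dif_pos hex]; exact hex.choose_spec
    rw [intPair_symm hMsymm]
    have : (fun t => (((g - rep (m g)) t : ℤ) : ℚ)) =
        (fun t => ((g t : ℤ) : ℚ)) + (fun t => (((- rep (m g)) t : ℤ) : ℚ)) := by
      funext t; simp only [Pi.sub_apply, Pi.neg_apply, Pi.add_apply]; push_cast; ring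
    rw [this, intPair_add_right, hm, hm]
    have hmneg : m (-rep (m g)) = fun i => - m (rep (m g)) i := by
      funext i
      simp only [hm_def]
      rw [← Finset.sum_neg_distrib]
      refine Finset.sum_congr rfl fun t _ => ?_
      rw [← Finset.sum_neg_distrib]
      refine Finset.sum_congr rfl fun j _ => ?_
      simp only [Pi.neg_apply]; ring
    rw [hmneg]
    have := congrFun hg0 i
    push_cast
    rw [this]
    ring
  · -- decomposition of ν g
    simp only [Equiv.symm_apply_apply, ThetaData.nu]
    funext t
    simp only [Pi.add_apply, Pi.sub_apply]
    push_cast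
    ring
end

section
/- Let M be a ℚ-vector space with a symmetric bilinear form ⟨·,·⟩, let m ≥ 1, let r₁,…,r_m be positive rational numbers and β₁,…,β_m ∈ M. Set r = r₁ + ⋯ + r_m and β = β₁ + ⋯ + β_m. Then ⟨β,β⟩/(2r) − Σ_{i=1}^{m} ⟨β_i,β_i⟩/(2r_i) = − Σ_{1 ≤ i < j ≤ m} ⟨r_j β_i − r_i β_j, r_j β_i − r_i β_j⟩ / (2 r r_i r_j). -/
open scoped BigOperators

private lemma sum_pair_split {m : ℕ} (f : Fin m → Fin m → ℚ) :
    (∑ i, ∑ j ∈ Finset.Ioi i, (f i j + f j i))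
      = ∑ i, ∑ j ∈ Finset.univ.erase i, f i j := by
  have hswap : (∑ i, ∑ j ∈ Finset.Ioi i, f j i) = ∑ i, ∑ j ∈ Finset.Iio i, f i j := by
    refine Finset.sum_comm' ?_
    intro x y
    simp only [Finset.mem_univ, true_and, Finset.mem_Ioi, Finset.mem_Iio, and_true]
  have herase : ∀ i : Fin m, Finset.univ.erase i = Finset.Ioi i ∪ Finset.Iio i := by
    intro i
    ext j
    simp only [Finset.mem_erase, Finset.mem_univ, and_true, Finset.mem_union,
      Finset.mem_Ioi, Finset.mem_Iio]
    exact ne_comm.trans ne_iff_lt_or_gt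
  have hdisj : ∀ i : Fin m, Disjoint (Finset.Ioi i) (Finset.Iio i) := by
    intro i
    refine Finset.disjoint_left.2 fun j hj hj' => ?_
    simp only [Finset.mem_Ioi] at hj
    simp only [Finset.mem_Iio] at hj'
    exact absurd hj (not_lt.2 hj'.le)
  calc (∑ i, ∑ j ∈ Finset.Ioi i, (f i j + f j i))
      = (∑ i, ∑ j ∈ Finset.Ioi i, f i j) + ∑ i, ∑ j ∈ Finset.Ioi i, f j i := by
        rw [← Finset.sum_add_distrib]
        exact Finset.sum_congr rfl fun i _ => Finset.sum_add_distrib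
    _ = (∑ i, ∑ j ∈ Finset.Ioi i, f i j) + ∑ i, ∑ j ∈ Finset.Iio i, f i j := by rw [hswap]
    _ = ∑ i, ((∑ j ∈ Finset.Ioi i, f i j) + ∑ j ∈ Finset.Iio i, f i j) := by
        rw [Finset.sum_add_distrib]
    _ = ∑ i, ∑ j ∈ Finset.univ.erase i, f i j := by
        refine Finset.sum_congr rfl fun i _ => ?_
        rw [herase i, Finset.sum_union (hdisj i)]

/-- Let `M` be a ℚ-vector space with a symmetric bilinear form `⟨·,·⟩`,
`m ≥ 1`, `r₁,…,r_m` positive rationals and `β₁,…,β_m ∈ M`; set `r = Σ r_i`,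
`β = Σ β_i`.  Then
`⟨β,β⟩/(2r) − Σ_i ⟨β_i,β_i⟩/(2r_i) = − Σ_{i<j} ⟨r_jβ_i − r_iβ_j, r_jβ_i − r_iβ_j⟩/(2 r r_i r_j)`. -/
theorem discriminant_difference_formula (M : Type*) [AddCommGroup M] [Module ℚ M]
    (B : LinearMap.BilinForm ℚ M) (hsymm : ∀ x y, B x y = B y x)
    (m : ℕ) (hm : 1 ≤ m) (r : Fin m → ℚ) (hr : ∀ i, 0 < r i) (β : Fin m → M) :
    B (∑ i, β i) (∑ i, β i) / (2 * ∑ i, r i) - ∑ i, B (β i) (β i) / (2 * r i)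
      = -∑ i, ∑ j ∈ Finset.Ioi i,
          B (r j • β i - r i • β j) (r j • β i - r i • β j) /
            (2 * (∑ t, r t) * r i * r j) := by
  have hne : Nonempty (Fin m) := ⟨⟨0, hm⟩⟩
  set R : ℚ := ∑ t, r t with hRdef
  have hRpos : 0 < R := Finset.sum_pos (fun i _ => hr i) Finset.univ_nonempty
  have hR0 : R ≠ 0 := hRpos.ne'
  have hri : ∀ i, r i ≠ 0 := fun i => (hr i).ne'
  -- expand each term of the RHS
  have hterm : ∀ i j : Fin m,
      B (r j • β i - r i • β j) (r j • β i - r i • β j) / (2 * R * r i * r j)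
        = (r j * B (β i) (β i) / (2 * R * r i) + r i * B (β j) (β j) / (2 * R * r j))
          + (-(B (β i) (β j) / (2 * R)) + -(B (β j) (β i) / (2 * R))) := by
    intro i j
    have hb : B (r j • β i - r i • β j) (r j • β i - r i • β j)
        = r j * r j * B (β i) (β i) - r j * r i * B (β i) (β j)
          - r i * r j * B (β j) (β i) + r i * r i * B (β j) (β j) := by
      simp only [map_sub, map_smul, LinearMap.sub_apply, LinearMap.smul_apply,
        smul_eq_mul]
      ring
    rw [hb, hsymm (β j) (β i)]
    field_simp [hri i, hri j, hR0]
    ring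
  have hrw : (∑ i, ∑ j ∈ Finset.Ioi i,
      B (r j • β i - r i • β j) (r j • β i - r i • β j) / (2 * R * r i * r j))
      = (∑ i, ∑ j ∈ Finset.Ioi i,
          ((fun i j => r j * B (β i) (β i) / (2 * R * r i)) i j
            + (fun i j => r j * B (β i) (β i) / (2 * R * r i)) j i))
        + ∑ i, ∑ j ∈ Finset.Ioi i,
          ((fun i j => -(B (β i) (β j) / (2 * R))) i j
            + (fun i j => -(B (β i) (β j) / (2 * R))) j i) := by
    rw [← Finset.sum_add_distrib]
    refine Finset.sum_congr rfl fun i _ => ?_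
    rw [← Finset.sum_add_distrib]
    exact Finset.sum_congr rfl fun j _ => hterm i j
  rw [hrw, sum_pair_split, sum_pair_split]
  -- now everything is sums over erased sets
  have hS : B (∑ i, β i) (∑ i, β i) = ∑ i, ∑ j, B (β i) (β j) := by
    simp only [map_sum, LinearMap.sum_apply]
    exact Finset.sum_comm
  have h1 : ∀ i : Fin m, (∑ j ∈ Finset.univ.erase i, r j * B (β i) (β i) / (2 * R * r i))
      = (R - r i) * B (β i) (β i) / (2 * R * r i) := by
    intro i
    rw [← Finset.sum_div, ← Finset.sum_mul, Finset.sum_erase_eq_sub (Finset.mem_univ i)]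
  have h2 : ∀ i : Fin m, (∑ j ∈ Finset.univ.erase i, -(B (β i) (β j) / (2 * R)))
      = -(((∑ j, B (β i) (β j)) - B (β i) (β i)) / (2 * R)) := by
    intro i
    rw [Finset.sum_neg_distrib, ← Finset.sum_div, Finset.sum_erase_eq_sub (Finset.mem_univ i)]
  simp only [h1, h2, hS]
  rw [Finset.sum_div, ← Finset.sum_sub_distrib, ← Finset.sum_add_distrib,
    ← Finset.sum_neg_distrib]
  refine Finset.sum_congr rfl fun i _ => ?_
  field_simp [hri i, hR0]
  ring
end

section
/- Let m ≥ 2 and let r₁,…,r_m be positive real numbers. Define the symmetric (m−1)×(m−1) matrix A = (a_{ij}) by a_{ij} = − (Σ_{k=1}^{min(i,j)} r_k)(Σ_{l=max(i,j)+1}^{m} r_l). Then for all real numbers x₁,…,x_{m−1}: Σ_{i,j=1}^{m−1} a_{ij} x_i x_j = − Σ_{1 ≤ i < j ≤ m} r_i r_j (x_i + x_{i+1} + ⋯ + x_{j−1})². -/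
open scoped BigOperators

private lemma if_sum_filter {m : ℕ} {p : ℕ → Prop} [DecidablePred p] (g : ℕ → ℝ)
    {s : Finset ℕ} (hs : s = (Finset.range m).filter p) :
    ∑ k ∈ s, g k = ∑ k ∈ Finset.range m, if p k then g k else 0 := by
  subst hs; exact Finset.sum_filter _ _

private lemma if_push (P : Prop) [Decidable P] (s t : Finset ℕ) (G : ℕ → ℕ → ℝ) :
    (if P then ∑ i ∈ s, ∑ j ∈ t, G i j else 0)
      = ∑ i ∈ s, ∑ j ∈ t, if P then G i j else 0 := by
  split_ifs <;> simp

private lemma if_push1 (P : Prop) [Decidable P] (s : Finset ℕ) (G : ℕ → ℝ) :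
    (if P then ∑ i ∈ s, G i else 0) = ∑ i ∈ s, if P then G i else 0 := by
  split_ifs <;> simp

private lemma expand_prod (c : ℝ) (s t : Finset ℕ) (f g : ℕ → ℝ) :
    (-((∑ k ∈ s, f k) * (∑ l ∈ t, g l))) * c
      = ∑ k ∈ s, ∑ l ∈ t, -(f k * g l * c) := by
  rw [Finset.sum_mul_sum]
  simp only [neg_mul, Finset.sum_mul, Finset.sum_neg_distrib]

private lemma expand_sq (c : ℝ) (s : Finset ℕ) (x : ℕ → ℝ) :
    -(c * (∑ t ∈ s, x t) ^ 2) = ∑ i ∈ s, ∑ j ∈ s, -(c * (x i * x j)) := by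
  rw [sq, Finset.sum_mul_sum]
  simp only [Finset.mul_sum, Finset.sum_neg_distrib]

private lemma quad_comm (s : Finset ℕ) (f : ℕ → ℕ → ℕ → ℕ → ℝ) :
    ∑ a ∈ s, ∑ b ∈ s, ∑ c ∈ s, ∑ d ∈ s, f a b c d
      = ∑ c ∈ s, ∑ d ∈ s, ∑ a ∈ s, ∑ b ∈ s, f a b c d := by
  calc ∑ a ∈ s, ∑ b ∈ s, ∑ c ∈ s, ∑ d ∈ s, f a b c d
      = ∑ a ∈ s, ∑ c ∈ s, ∑ b ∈ s, ∑ d ∈ s, f a b c d :=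
        Finset.sum_congr rfl fun a _ => Finset.sum_comm
    _ = ∑ c ∈ s, ∑ a ∈ s, ∑ b ∈ s, ∑ d ∈ s, f a b c d := Finset.sum_comm
    _ = ∑ c ∈ s, ∑ a ∈ s, ∑ d ∈ s, ∑ b ∈ s, f a b c d :=
        Finset.sum_congr rfl fun c _ => Finset.sum_congr rfl fun a _ => Finset.sum_comm
    _ = ∑ c ∈ s, ∑ d ∈ s, ∑ a ∈ s, ∑ b ∈ s, f a b c d :=
        Finset.sum_congr rfl fun c _ => Finset.sum_comm

/-- 0-based indexing: for `m ≥ 2` and positive reals `r_0,…,r_{m−1}`,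
with the symmetric `(m−1)×(m−1)` matrix `A` given by
`a_{ij} = −(Σ_{k=0}^{min i j} r_k)(Σ_{l=max i j + 1}^{m−1} r_l)`, one has for all
reals `x_0,…,x_{m−2}`:
`Σ_{i,j} a_{ij} x_i x_j = −Σ_{i<j<m} r_i r_j (x_i + ⋯ + x_{j−1})²`. -/
theorem quadratic_form_matrix_identity (m : ℕ) (hm : 2 ≤ m) (r : ℕ → ℝ)
    (hr : ∀ t < m, 0 < r t) (x : ℕ → ℝ) :
    ∑ i ∈ Finset.range (m - 1), ∑ j ∈ Finset.range (m - 1),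
        (-((∑ k ∈ Finset.range (min i j + 1), r k) *
            (∑ l ∈ Finset.Ico (max i j + 1) m, r l))) * x i * x j
      = -∑ i ∈ Finset.range m, ∑ j ∈ Finset.Ico (i + 1) m,
          r i * r j * (∑ t ∈ Finset.Ico i j, x t) ^ 2 := by
  classical
  set F : ℕ → ℕ → ℕ → ℕ → ℝ := fun i j k l =>
    if k ≤ i ∧ k ≤ j ∧ i < l ∧ j < l then -(r k * r l * (x i * x j)) else 0 with hF
  -- Step 1: LHS equals quadruple if-sum over range m
  have hL : ∑ i ∈ Finset.range (m - 1), ∑ j ∈ Finset.range (m - 1),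
        (-((∑ k ∈ Finset.range (min i j + 1), r k) *
            (∑ l ∈ Finset.Ico (max i j + 1) m, r l))) * x i * x j
      = ∑ i ∈ Finset.range m, ∑ j ∈ Finset.range m, ∑ k ∈ Finset.range m,
          ∑ l ∈ Finset.range m, F i j k l := by
    have step : ∀ i < m - 1, ∀ j < m - 1,
        (-((∑ k ∈ Finset.range (min i j + 1), r k) *
            (∑ l ∈ Finset.Ico (max i j + 1) m, r l))) * x i * x j
        = ∑ k ∈ Finset.range m, ∑ l ∈ Finset.range m, F i j k l := by
      intro i hi j hj
      rw [show (-((∑ k ∈ Finset.range (min i j + 1), r k) *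
            (∑ l ∈ Finset.Ico (max i j + 1) m, r l))) * x i * x j
          = (-((∑ k ∈ Finset.range (min i j + 1), r k) *
            (∑ l ∈ Finset.Ico (max i j + 1) m, r l))) * (x i * x j) by ring]
      rw [expand_prod]
      have hk : Finset.range (min i j + 1)
          = (Finset.range m).filter (fun k => k < min i j + 1) := by
        ext k; simp only [Finset.mem_range, Finset.mem_filter]; omega
      have hl : Finset.Ico (max i j + 1) m
          = (Finset.range m).filter (fun l => max i j + 1 ≤ l) := by
        ext l; simp only [Finset.mem_range, Finset.mem_filter, Finset.mem_Ico]; omega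
      rw [if_sum_filter _ hk]
      refine Finset.sum_congr rfl fun k _ => ?_
      rw [if_sum_filter _ hl, if_push1]
      refine Finset.sum_congr rfl fun l _ => ?_
      rw [hF]
      simp only
      rw [← ite_and]
      refine if_congr ?_ rfl rfl
      omega
    calc ∑ i ∈ Finset.range (m - 1), ∑ j ∈ Finset.range (m - 1),
        (-((∑ k ∈ Finset.range (min i j + 1), r k) *
            (∑ l ∈ Finset.Ico (max i j + 1) m, r l))) * x i * x j
        = ∑ i ∈ Finset.range (m - 1), ∑ j ∈ Finset.range (m - 1),
            ∑ k ∈ Finset.range m, ∑ l ∈ Finset.range m, F i j k l := by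
          refine Finset.sum_congr rfl fun i hi => Finset.sum_congr rfl fun j hj => ?_
          exact step i (Finset.mem_range.1 hi) j (Finset.mem_range.1 hj)
      _ = ∑ i ∈ Finset.range (m - 1), ∑ j ∈ Finset.range m,
            ∑ k ∈ Finset.range m, ∑ l ∈ Finset.range m, F i j k l := by
          refine Finset.sum_congr rfl fun i hi => ?_
          refine Finset.sum_subset (Finset.range_subset_range.2 (by omega)) ?_
          intro j hj hj'
          refine Finset.sum_eq_zero fun k _ => Finset.sum_eq_zero fun l hl => ?_
          rw [hF]; simp only
          rw [if_neg]
          rintro ⟨-, -, -, h4⟩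
          simp only [Finset.mem_range] at hj hl hj'
          omega
      _ = ∑ i ∈ Finset.range m, ∑ j ∈ Finset.range m,
            ∑ k ∈ Finset.range m, ∑ l ∈ Finset.range m, F i j k l := by
          refine Finset.sum_subset (Finset.range_subset_range.2 (by omega)) ?_
          intro i hi hi'
          refine Finset.sum_eq_zero fun j _ => Finset.sum_eq_zero fun k _ =>
            Finset.sum_eq_zero fun l hl => ?_
          rw [hF]; simp only
          rw [if_neg]
          rintro ⟨-, -, h3, -⟩
          simp only [Finset.mem_range] at hi hl hi'
          omega
  -- Step 2: RHS equals the same quadruple if-sum (reordered)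
  have hR : -∑ i ∈ Finset.range m, ∑ j ∈ Finset.Ico (i + 1) m,
          r i * r j * (∑ t ∈ Finset.Ico i j, x t) ^ 2
      = ∑ k ∈ Finset.range m, ∑ l ∈ Finset.range m, ∑ i ∈ Finset.range m,
          ∑ j ∈ Finset.range m, F i j k l := by
    rw [← Finset.sum_neg_distrib]
    refine Finset.sum_congr rfl fun k hk => ?_
    rw [← Finset.sum_neg_distrib]
    have hIco : Finset.Ico (k + 1) m = (Finset.range m).filter (fun l => k + 1 ≤ l) := by
      ext l; simp only [Finset.mem_range, Finset.mem_filter, Finset.mem_Ico]; omega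
    rw [if_sum_filter _ hIco]
    refine Finset.sum_congr rfl fun l hl => ?_
    by_cases hkl : k + 1 ≤ l
    · rw [if_pos hkl]
      rw [show -(r k * r l * (∑ t ∈ Finset.Ico k l, x t) ^ 2)
          = -((r k * r l) * (∑ t ∈ Finset.Ico k l, x t) ^ 2) by ring]
      rw [expand_sq]
      have hIkl : Finset.Ico k l = (Finset.range m).filter (fun t => k ≤ t ∧ t < l) := by
        ext t
        simp only [Finset.mem_range, Finset.mem_filter, Finset.mem_Ico]
        simp only [Finset.mem_range] at hl
        omega
      rw [if_sum_filter _ hIkl]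
      refine Finset.sum_congr rfl fun i _ => ?_
      rw [if_sum_filter _ hIkl, if_push1]
      refine Finset.sum_congr rfl fun j _ => ?_
      rw [hF]; simp only
      rw [← ite_and]
      refine if_congr ?_ (by ring) rfl
      constructor
      · rintro ⟨⟨h1, h2⟩, h3, h4⟩; exact ⟨h1, h3, h2, h4⟩
      · rintro ⟨h1, h2, h3, h4⟩; exact ⟨⟨h1, h3⟩, h2, h4⟩
    · rw [if_neg hkl]
      refine (Finset.sum_eq_zero fun i _ => Finset.sum_eq_zero fun j _ => ?_).symm
      rw [hF]; simp only
      rw [if_neg]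
      rintro ⟨h1, -, h3, -⟩
      omega
  rw [hL, hR, quad_comm]
end

section
/- Let m ≥ 2 and let r₁,…,r_m be positive real numbers, let A = (a_{ij}) be the symmetric (m−1)×(m−1) matrix with a_{ij} = − (Σ_{k=1}^{min(i,j)} r_k)(Σ_{l=max(i,j)+1}^{m} r_l), and let ⟨·,·⟩ be the symmetric bilinear form on ℝ² given by ⟨(x₁,y₁),(x₂,y₂)⟩ = x₁x₂ − y₁y₂. Then the symmetric bilinear form B on (ℝ²)^{m−1} defined by B(ν,ν′) = Σ_{i,j=1}^{m−1} a_{ij} ⟨ν_i, ν′_j⟩ is non-degenerate of signature (m−1, m−1); in particular det A ≠ 0. -/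
open scoped BigOperators

/-- The hyperbolic pairing `⟨(x₁,y₁),(x₂,y₂)⟩ = x₁x₂ − y₁y₂` on `ℝ²`, the intersection
form of the Néron–Severi lattice of the blow-up of `ℙ²` at a point, of signature
`(1,1)`. -/
def hypPair (p q : ℝ × ℝ) : ℝ := p.1 * q.1 - p.2 * q.2

/-- The symmetric `(m−1)×(m−1)` matrix `A` (0-based indexing) with entries
`a_{ij} = −(Σ_{k=0}^{min i j} r_k)(Σ_{l=max i j + 1}^{m−1} r_l)`. -/
noncomputable def wallMatrix (m : ℕ) (r : ℕ → ℝ) :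
    Matrix (Fin (m - 1)) (Fin (m - 1)) ℝ :=
  fun i j =>
    -((∑ k ∈ Finset.range (min (i : ℕ) (j : ℕ) + 1), r k) *
      (∑ l ∈ Finset.Ico (max (i : ℕ) (j : ℕ) + 1) m, r l))

/-- The symmetric bilinear form `B(ν,ν′) = Σ_{i,j} a_{ij} ⟨ν_i, ν′_j⟩` on
`(ℝ²)^{m−1}`. -/
noncomputable def wallForm (m : ℕ) (r : ℕ → ℝ)
    (ν ν' : Fin (m - 1) → ℝ × ℝ) : ℝ :=
  ∑ i, ∑ j, wallMatrix m r i j * hypPair (ν i) (ν' j)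


noncomputable def uu (r : ℕ → ℝ) (k : ℕ) : ℝ := ∑ t ∈ Finset.range (k + 1), r t

noncomputable def vv (m : ℕ) (r : ℕ → ℝ) (k : ℕ) : ℝ := ∑ l ∈ Finset.Ico (k + 1) m, r l

noncomputable def qq (m : ℕ) (r : ℕ → ℝ) (k : ℕ) : ℝ := uu r k / vv m r k

noncomputable def dd (m : ℕ) (r : ℕ → ℝ) : ℕ → ℝ
  | 0 => qq m r 0
  | (k + 1) => qq m r (k + 1) - qq m r k

noncomputable def SS (m : ℕ) (r : ℕ → ℝ) (x : Fin (m - 1) → ℝ) (k : ℕ) : ℝ :=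
  ∑ i : Fin (m - 1), if k ≤ (i : ℕ) then vv m r (i : ℕ) * x i else 0

lemma uu_pos {m : ℕ} {r : ℕ → ℝ} (hr : ∀ t < m, 0 < r t) {k : ℕ} (hk : k < m) :
    0 < uu r k := by
  apply Finset.sum_pos
  · intro t ht
    exact hr t (by simp at ht; omega)
  · exact ⟨0, by simp⟩

lemma vv_pos {m : ℕ} {r : ℕ → ℝ} (hr : ∀ t < m, 0 < r t) {k : ℕ} (hk : k + 1 < m) :
    0 < vv m r k := by
  apply Finset.sum_pos
  · intro t ht
    exact hr t (by simp [Finset.mem_Ico] at ht; omega)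
  · exact ⟨k + 1, by simp [Finset.mem_Ico]; omega⟩

lemma telescope (m : ℕ) (r : ℕ → ℝ) (K : ℕ) :
    ∑ k ∈ Finset.range (K + 1), dd m r k = qq m r K := by
  induction K with
  | zero => simp [dd]
  | succ K ih => rw [Finset.sum_range_succ, ih]; simp [dd]

lemma dd_pos {m : ℕ} {r : ℕ → ℝ} (hr : ∀ t < m, 0 < r t) {k : ℕ} (hk : k < m - 1) :
    0 < dd m r k := by
  cases k with
  | zero =>
    have hu := uu_pos hr (show 0 < m by omega)
    have hv := vv_pos hr (show 0 + 1 < m by omega)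
    exact div_pos hu hv
  | succ k =>
    have hu : 0 < uu r k := uu_pos hr (by omega)
    have hv1 : 0 < vv m r (k + 1) := vv_pos hr (by omega)
    have hv0 : 0 < vv m r k := vv_pos hr (by omega)
    have hrk : 0 < r (k + 1) := hr _ (by omega)
    have hu1 : uu r (k + 1) = uu r k + r (k + 1) := by
      simp [uu, Finset.sum_range_succ]
    have hv01 : vv m r k = r (k + 1) + vv m r (k + 1) := by
      rw [vv, vv]
      exact Finset.sum_eq_sum_Ico_succ_bot (by omega) r
    have : qq m r k < qq m r (k + 1) := by
      rw [qq, qq, div_lt_div_iff₀ hv0 hv1]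
      nlinarith
    simpa [dd] using sub_pos.mpr this

lemma key (m : ℕ) (hm : 2 ≤ m) (r : ℕ → ℝ) (hr : ∀ t < m, 0 < r t)
    (x : Fin (m - 1) → ℝ) :
    ∑ i : Fin (m - 1), ∑ j : Fin (m - 1),
        uu r (min (i : ℕ) (j : ℕ)) * vv m r (max (i : ℕ) (j : ℕ)) * x i * x j
      = ∑ k ∈ Finset.range (m - 1), dd m r k * (SS m r x k) ^ 2 := by
  have pw : ∀ i j : Fin (m - 1),
      uu r (min (i : ℕ) (j : ℕ)) * vv m r (max (i : ℕ) (j : ℕ)) * x i * x j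
        = ∑ k ∈ Finset.range (m - 1),
            (if k ≤ (i : ℕ) then vv m r (i : ℕ) * x i else 0) *
            (if k ≤ (j : ℕ) then vv m r (j : ℕ) * x j else 0) * dd m r k := by
    intro i j
    have hi : (i : ℕ) < m - 1 := i.isLt
    have hj : (j : ℕ) < m - 1 := j.isLt
    have h1 : uu r (min (i : ℕ) (j : ℕ)) * vv m r (max (i : ℕ) (j : ℕ))
        = vv m r (i : ℕ) * vv m r (j : ℕ) * qq m r (min (i : ℕ) (j : ℕ)) := by
      rcases le_total (i : ℕ) (j : ℕ) with h | h
      · rw [min_eq_left h, max_eq_right h, qq]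
        field_simp [ne_of_gt (vv_pos hr (show (i:ℕ) + 1 < m by omega))]
      · rw [min_eq_right h, max_eq_left h, qq]
        field_simp [ne_of_gt (vv_pos hr (show (j:ℕ) + 1 < m by omega))]
    have h2 : qq m r (min (i : ℕ) (j : ℕ))
        = ∑ k ∈ Finset.range (m - 1), (if k ≤ min (i : ℕ) (j : ℕ) then dd m r k else 0) := by
      rw [← Finset.sum_filter]
      have hfil : (Finset.range (m - 1)).filter (· ≤ min (i : ℕ) (j : ℕ))
          = Finset.range (min (i : ℕ) (j : ℕ) + 1) := by
        ext a
        simp only [Finset.mem_filter, Finset.mem_range]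
        omega
      rw [hfil, telescope]
    rw [h1, h2, Finset.mul_sum, Finset.sum_mul, Finset.sum_mul]
    apply Finset.sum_congr rfl
    intro k _
    by_cases hki : k ≤ (i : ℕ) <;> by_cases hkj : k ≤ (j : ℕ) <;>
      simp [hki, hkj, le_min_iff] <;> ring
  calc
    ∑ i : Fin (m - 1), ∑ j : Fin (m - 1),
        uu r (min (i : ℕ) (j : ℕ)) * vv m r (max (i : ℕ) (j : ℕ)) * x i * x j
      = ∑ i : Fin (m - 1), ∑ j : Fin (m - 1), ∑ k ∈ Finset.range (m - 1),
            (if k ≤ (i : ℕ) then vv m r (i : ℕ) * x i else 0) *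
            (if k ≤ (j : ℕ) then vv m r (j : ℕ) * x j else 0) * dd m r k := by
        exact Finset.sum_congr rfl fun i _ => Finset.sum_congr rfl fun j _ => pw i j
    _ = ∑ i : Fin (m - 1), ∑ k ∈ Finset.range (m - 1), ∑ j : Fin (m - 1),
            (if k ≤ (i : ℕ) then vv m r (i : ℕ) * x i else 0) *
            (if k ≤ (j : ℕ) then vv m r (j : ℕ) * x j else 0) * dd m r k :=
        Finset.sum_congr rfl fun i _ => Finset.sum_comm
    _ = ∑ k ∈ Finset.range (m - 1), ∑ i : Fin (m - 1), ∑ j : Fin (m - 1),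
            (if k ≤ (i : ℕ) then vv m r (i : ℕ) * x i else 0) *
            (if k ≤ (j : ℕ) then vv m r (j : ℕ) * x j else 0) * dd m r k :=
        Finset.sum_comm
    _ = ∑ k ∈ Finset.range (m - 1), dd m r k * (SS m r x k) ^ 2 := by
        apply Finset.sum_congr rfl
        intro k _
        rw [SS, sq, Finset.sum_mul_sum, Finset.mul_sum]
        apply Finset.sum_congr rfl
        intro i _
        rw [Finset.mul_sum]
        apply Finset.sum_congr rfl
        intro j _
        ring

lemma quad_nonneg (m : ℕ) (hm : 2 ≤ m) (r : ℕ → ℝ) (hr : ∀ t < m, 0 < r t)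
    (x : Fin (m - 1) → ℝ) :
    0 ≤ ∑ i : Fin (m - 1), ∑ j : Fin (m - 1),
        uu r (min (i : ℕ) (j : ℕ)) * vv m r (max (i : ℕ) (j : ℕ)) * x i * x j := by
  rw [key m hm r hr x]
  apply Finset.sum_nonneg
  intro k hk
  exact mul_nonneg (dd_pos hr (Finset.mem_range.mp hk)).le (sq_nonneg _)

lemma quad_eq_zero (m : ℕ) (hm : 2 ≤ m) (r : ℕ → ℝ) (hr : ∀ t < m, 0 < r t)
    (x : Fin (m - 1) → ℝ)
    (h : ∑ i : Fin (m - 1), ∑ j : Fin (m - 1),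
        uu r (min (i : ℕ) (j : ℕ)) * vv m r (max (i : ℕ) (j : ℕ)) * x i * x j = 0) :
    x = 0 := by
  rw [key m hm r hr x] at h
  have hS : ∀ k ∈ Finset.range (m - 1), dd m r k * (SS m r x k) ^ 2 = 0 :=
    (Finset.sum_eq_zero_iff_of_nonneg fun k hk =>
      mul_nonneg (dd_pos hr (Finset.mem_range.mp hk)).le (sq_nonneg _)).mp h
  have hS' : ∀ k : ℕ, SS m r x k = 0 := by
    intro k
    by_cases hk : k < m - 1
    · have h0 := hS k (Finset.mem_range.mpr hk)
      have hd := (dd_pos hr hk).ne'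
      rcases mul_eq_zero.mp h0 with h' | h'
      · exact absurd h' hd
      · exact pow_eq_zero_iff (by norm_num) |>.mp h'
    · rw [SS]
      apply Finset.sum_eq_zero
      intro i _
      rw [if_neg]
      have := i.isLt
      omega
  funext i
  have hi : (i : ℕ) < m - 1 := i.isLt
  have hvi : 0 < vv m r (i : ℕ) := vv_pos hr (by omega)
  have hdiff : vv m r (i : ℕ) * x i = SS m r x (i : ℕ) - SS m r x ((i : ℕ) + 1) := by
    rw [SS, SS, ← Finset.sum_sub_distrib]
    have hpt : ∀ i' : Fin (m - 1),
        ((if (i : ℕ) ≤ (i' : ℕ) then vv m r (i' : ℕ) * x i' else 0) -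
         (if (i : ℕ) + 1 ≤ (i' : ℕ) then vv m r (i' : ℕ) * x i' else 0))
          = if i' = i then vv m r (i : ℕ) * x i else 0 := by
      intro i'
      by_cases h1 : (i : ℕ) ≤ (i' : ℕ) <;> by_cases h2 : (i : ℕ) + 1 ≤ (i' : ℕ)
      · rw [if_pos h1, if_pos h2, if_neg (by intro hE; subst hE; omega), sub_self]
      · have hE : i' = i := Fin.ext (by omega)
        subst hE
        rw [if_pos h1, if_neg h2, if_pos rfl, sub_zero]
      · omega
      · rw [if_neg h1, if_neg h2, if_neg (by intro hE; subst hE; omega), sub_self]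
    rw [Finset.sum_congr rfl fun i' _ => hpt i']
    simp
  rw [hS', hS', sub_self] at hdiff
  have := mul_eq_zero.mp hdiff
  rcases this with h' | h'
  · exact absurd h' hvi.ne'
  · simpa using h'

lemma wallMatrix_eq (m : ℕ) (r : ℕ → ℝ) (i j : Fin (m - 1)) :
    wallMatrix m r i j = -(uu r (min (i : ℕ) (j : ℕ)) * vv m r (max (i : ℕ) (j : ℕ))) := rfl

lemma wallForm_expand (m : ℕ) (r : ℕ → ℝ) (ν ν' : Fin (m - 1) → ℝ × ℝ) :
    wallForm m r ν ν' =
      (∑ i : Fin (m - 1), ∑ j : Fin (m - 1),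
        uu r (min (i : ℕ) (j : ℕ)) * vv m r (max (i : ℕ) (j : ℕ)) * (ν i).2 * (ν' j).2)
      - ∑ i : Fin (m - 1), ∑ j : Fin (m - 1),
        uu r (min (i : ℕ) (j : ℕ)) * vv m r (max (i : ℕ) (j : ℕ)) * (ν i).1 * (ν' j).1 := by
  rw [wallForm, ← Finset.sum_sub_distrib]
  refine Finset.sum_congr rfl fun i _ => ?_
  rw [← Finset.sum_sub_distrib]
  refine Finset.sum_congr rfl fun j _ => ?_
  rw [wallMatrix_eq, hypPair]
  ring

/-- For `m ≥ 2` and positive reals `r_0,…,r_{m−1}`, the symmetric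
bilinear form `B(ν,ν′) = Σ_{i,j} a_{ij} ⟨ν_i, ν′_j⟩` on `(ℝ²)^{m−1}` is
non-degenerate of signature `(m−1, m−1)` (there exist a positive definite and a
negative definite subspace, each of dimension `m−1`, of the `2(m−1)`-dimensional
space `(ℝ²)^{m−1}`); in particular `det A ≠ 0`. -/
theorem wallForm_nondegenerate_signature (m : ℕ) (hm : 2 ≤ m) (r : ℕ → ℝ)
    (hr : ∀ t < m, 0 < r t) :
    (∀ ν : Fin (m - 1) → ℝ × ℝ, (∀ ν', wallForm m r ν ν' = 0) → ν = 0) ∧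
    (∃ P : Submodule ℝ (Fin (m - 1) → ℝ × ℝ), Module.finrank ℝ P = m - 1 ∧
      ∀ v ∈ P, v ≠ 0 → 0 < wallForm m r v v) ∧
    (∃ N : Submodule ℝ (Fin (m - 1) → ℝ × ℝ), Module.finrank ℝ N = m - 1 ∧
      ∀ v ∈ N, v ≠ 0 → wallForm m r v v < 0) ∧
    (wallMatrix m r).det ≠ 0 := by
  -- quadratic form positivity
  have quad_pos : ∀ x : Fin (m - 1) → ℝ, x ≠ 0 →
      0 < ∑ i : Fin (m - 1), ∑ j : Fin (m - 1),
        uu r (min (i : ℕ) (j : ℕ)) * vv m r (max (i : ℕ) (j : ℕ)) * x i * x j := by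
    intro x hx
    refine (quad_nonneg m hm r hr x).lt_of_ne ?_
    intro h0
    exact hx (quad_eq_zero m hm r hr x h0.symm)
  refine ⟨?_, ?_, ?_, ?_⟩
  · -- non-degeneracy
    intro ν h
    have test : ∀ (p : ℝ × ℝ) (j0 : Fin (m - 1)),
        ∑ i : Fin (m - 1), wallMatrix m r i j0 * hypPair (ν i) p = 0 := by
      intro p j0
      have h0 := h (fun j => if j = j0 then p else 0)
      rw [wallForm] at h0
      have e : ∀ i : Fin (m - 1),
          ∑ j, wallMatrix m r i j * hypPair (ν i) (if j = j0 then p else 0)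
            = wallMatrix m r i j0 * hypPair (ν i) p := by
        intro i
        rw [Finset.sum_eq_single j0]
        · simp
        · intro j _ hj
          simp [hj, hypPair]
        · simp
      rw [Finset.sum_congr rfl fun i _ => e i] at h0
      exact h0
    have hxz : ∀ j0 : Fin (m - 1),
        ∑ i : Fin (m - 1), uu r (min (i : ℕ) (j0 : ℕ)) * vv m r (max (i : ℕ) (j0 : ℕ)) *
          (ν i).1 = 0 := by
      intro j0
      have := test (1, 0) j0
      simp only [wallMatrix_eq, hypPair] at this ⊢
      have : -∑ i : Fin (m - 1), uu r (min (i : ℕ) (j0 : ℕ)) *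
          vv m r (max (i : ℕ) (j0 : ℕ)) * (ν i).1 = 0 := by
        rw [← this, ← Finset.sum_neg_distrib]
        exact Finset.sum_congr rfl fun i _ => by ring
      linarith
    have hyz : ∀ j0 : Fin (m - 1),
        ∑ i : Fin (m - 1), uu r (min (i : ℕ) (j0 : ℕ)) * vv m r (max (i : ℕ) (j0 : ℕ)) *
          (ν i).2 = 0 := by
      intro j0
      have := test (0, 1) j0
      simp only [wallMatrix_eq, hypPair] at this ⊢
      have : ∑ i : Fin (m - 1), uu r (min (i : ℕ) (j0 : ℕ)) *
          vv m r (max (i : ℕ) (j0 : ℕ)) * (ν i).2 = 0 := by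
        rw [← this]
        exact Finset.sum_congr rfl fun i _ => by ring
      linarith
    have hQ : ∀ (c : Fin (m - 1) → ℝ),
        (∀ j0 : Fin (m - 1), ∑ i : Fin (m - 1),
          uu r (min (i : ℕ) (j0 : ℕ)) * vv m r (max (i : ℕ) (j0 : ℕ)) * c i = 0) →
        c = 0 := by
      intro c hc
      apply quad_eq_zero m hm r hr c
      rw [Finset.sum_comm]
      apply Finset.sum_eq_zero
      intro j _
      have : ∑ i : Fin (m - 1), uu r (min (i : ℕ) (j : ℕ)) * vv m r (max (i : ℕ) (j : ℕ)) *
          c i * c j = (∑ i : Fin (m - 1),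
            uu r (min (i : ℕ) (j : ℕ)) * vv m r (max (i : ℕ) (j : ℕ)) * c i) * c j := by
        rw [Finset.sum_mul]
      rw [this, hc j, zero_mul]
    have hx0 : (fun i => (ν i).1) = 0 := hQ _ hxz
    have hy0 : (fun i => (ν i).2) = 0 := hQ _ hyz
    funext i
    have h1 := congrFun hx0 i
    have h2 := congrFun hy0 i
    simp only [Pi.zero_apply] at h1 h2
    ext
    · exact h1
    · exact h2
  · -- positive definite subspace
    let f : (Fin (m - 1) → ℝ) →ₗ[ℝ] (Fin (m - 1) → ℝ × ℝ) :=
      { toFun := fun y i => ((0 : ℝ), y i)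
        map_add' := by intro y z; funext i; simp
        map_smul' := by intro c y; funext i; simp }
    have hinj : Function.Injective f := by
      intro y z h
      funext i
      exact congrArg Prod.snd (congrFun h i)
    refine ⟨LinearMap.range f, ?_, ?_⟩
    · rw [LinearMap.finrank_range_of_inj hinj]
      simp
    · rintro v ⟨y, rfl⟩ hv
      have hy : y ≠ 0 := by
        intro h0
        apply hv
        rw [h0, map_zero]
      have hval : wallForm m r (f y) (f y) = ∑ i : Fin (m - 1), ∑ j : Fin (m - 1),
          uu r (min (i : ℕ) (j : ℕ)) * vv m r (max (i : ℕ) (j : ℕ)) * y i * y j := by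
        rw [wallForm_expand]
        have : ∑ i : Fin (m - 1), ∑ j : Fin (m - 1),
            uu r (min (i : ℕ) (j : ℕ)) * vv m r (max (i : ℕ) (j : ℕ)) *
              (f y i).1 * (f y j).1 = 0 := by
          apply Finset.sum_eq_zero; intro i _
          apply Finset.sum_eq_zero; intro j _
          show _ * (0 : ℝ) * _ = 0
          ring
        rw [this, sub_zero]
        rfl
      rw [hval]
      exact quad_pos y hy
  · -- negative definite subspace
    let g : (Fin (m - 1) → ℝ) →ₗ[ℝ] (Fin (m - 1) → ℝ × ℝ) :=
      { toFun := fun y i => (y i, (0 : ℝ))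
        map_add' := by intro y z; funext i; simp
        map_smul' := by intro c y; funext i; simp }
    have hinj : Function.Injective g := by
      intro y z h
      funext i
      exact congrArg Prod.fst (congrFun h i)
    refine ⟨LinearMap.range g, ?_, ?_⟩
    · rw [LinearMap.finrank_range_of_inj hinj]
      simp
    · rintro v ⟨y, rfl⟩ hv
      have hy : y ≠ 0 := by
        intro h0
        apply hv
        rw [h0, map_zero]
      have hval : wallForm m r (g y) (g y) = -∑ i : Fin (m - 1), ∑ j : Fin (m - 1),
          uu r (min (i : ℕ) (j : ℕ)) * vv m r (max (i : ℕ) (j : ℕ)) * y i * y j := by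
        rw [wallForm_expand]
        have : ∑ i : Fin (m - 1), ∑ j : Fin (m - 1),
            uu r (min (i : ℕ) (j : ℕ)) * vv m r (max (i : ℕ) (j : ℕ)) *
              (g y i).2 * (g y j).2 = 0 := by
          apply Finset.sum_eq_zero; intro i _
          apply Finset.sum_eq_zero; intro j _
          show _ * (0 : ℝ) * _ = 0
          ring
        rw [this, zero_sub]
        rfl
      rw [hval]
      simpa using quad_pos y hy
  · -- determinant
    intro h0
    obtain ⟨v, hv, hmul⟩ := (Matrix.exists_mulVec_eq_zero_iff).mpr h0
    apply hv
    apply quad_eq_zero m hm r hr v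
    apply Finset.sum_eq_zero
    intro i _
    have hrow : ∑ j : Fin (m - 1), wallMatrix m r i j * v j = 0 := by
      have := congrFun hmul i
      simpa [Matrix.mulVec, dotProduct] using this
    have hrow' : ∑ j : Fin (m - 1),
        uu r (min (i : ℕ) (j : ℕ)) * vv m r (max (i : ℕ) (j : ℕ)) * v j = 0 := by
      have : -∑ j : Fin (m - 1),
          uu r (min (i : ℕ) (j : ℕ)) * vv m r (max (i : ℕ) (j : ℕ)) * v j = 0 := by
        rw [← hrow, ← Finset.sum_neg_distrib]
        exact Finset.sum_congr rfl fun j _ => by rw [wallMatrix_eq]; ring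
      linarith
    calc ∑ j : Fin (m - 1),
          uu r (min (i : ℕ) (j : ℕ)) * vv m r (max (i : ℕ) (j : ℕ)) * v i * v j
        = v i * ∑ j : Fin (m - 1),
            uu r (min (i : ℕ) (j : ℕ)) * vv m r (max (i : ℕ) (j : ℕ)) * v j := by
          rw [Finset.mul_sum]
          exact Finset.sum_congr rfl fun j _ => by ring
      _ = 0 := by rw [hrow', mul_zero]
end

section
/- Let M be a ℚ-vector space with a symmetric bilinear form, and write v² for the self-pairing of v ∈ M. Let r₁, r₂ be positive rational numbers, β₁, β₂ ∈ M and s₁, s₂ ∈ ℚ with s_i ≤ β_i²/(2r_i) for i = 1,2. Set r = r₁ + r₂, β = β₁ + β₂, s = s₁ + s₂ and Δ = β² − 2rs. Then −r₁ r₂ Δ ≤ (r β₁ − r₁ β)². -/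
/-- Let `M` be a ℚ-vector space with a symmetric bilinear form, `v²`
denoting the self-pairing.  For positive rationals `r₁, r₂`, elements `β₁, β₂ ∈ M`
and `s₁, s₂ ∈ ℚ` with `s_i ≤ β_i²/(2r_i)`, setting `r = r₁ + r₂`, `β = β₁ + β₂`,
`s = s₁ + s₂` and `Δ = β² − 2rs`, one has `−r₁r₂Δ ≤ (rβ₁ − r₁β)²`. -/
theorem discriminant_wall_bound (M : Type*) [AddCommGroup M] [Module ℚ M]
    (B : LinearMap.BilinForm ℚ M) (hsymm : ∀ x y, B x y = B y x)
    (r₁ r₂ : ℚ) (hr₁ : 0 < r₁) (hr₂ : 0 < r₂) (β₁ β₂ : M) (s₁ s₂ : ℚ)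
    (h₁ : s₁ ≤ B β₁ β₁ / (2 * r₁)) (h₂ : s₂ ≤ B β₂ β₂ / (2 * r₂)) :
    -(r₁ * r₂ * (B (β₁ + β₂) (β₁ + β₂) - 2 * (r₁ + r₂) * (s₁ + s₂)))
      ≤ B ((r₁ + r₂) • β₁ - r₁ • (β₁ + β₂)) ((r₁ + r₂) • β₁ - r₁ • (β₁ + β₂)) := by
  have hb := hsymm β₁ β₂
  rw [le_div_iff₀ (by positivity : (0:ℚ) < 2 * r₁)] at h₁
  rw [le_div_iff₀ (by positivity : (0:ℚ) < 2 * r₂)] at h₂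
  simp only [map_add, map_sub, map_smul, LinearMap.add_apply, LinearMap.sub_apply,
    LinearMap.smul_apply, smul_eq_mul]
  nlinarith [mul_pos hr₁ hr₂, mul_le_mul_of_nonneg_left h₁ hr₂.le,
    mul_le_mul_of_nonneg_left h₂ hr₁.le, sq_nonneg (r₁ + r₂)]
end

section
/- Let r ≥ 1 and a be integers and let τ be in the upper half plane ℍ. Then both of the following series converge absolutely and are equal: Σ over (k₁,…,k_r) ∈ ℤ^r with k₁ + ⋯ + k_r = −a of e^{2πiτ( (k₁² + ⋯ + k_r²)/2 − a²/(2r) )}, and Σ over (k₁,…,k_{r−1}) ∈ (a/r, …, a/r) + ℤ^{r−1} of e^{2πiτ Σ_{1 ≤ i ≤ j ≤ r−1} k_i k_j} (for r = 1 the second sum is the single term 1). -/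
/-!
Parametrise the hyperplane `k₁ + ⋯ + k_r = -a` by its first `r - 1` coordinates. With
`x_i = a / r + k_i`, the identity `2 ∑_{i ≤ j} x_i x_j = (∑ x_i)² + ∑ x_i²` turns the exponent of
the lattice series into that of `ϑ_{r,a}`, so the two series agree term by term. Absolute
convergence comes from the lattice side, whose terms are dominated by products of Jacobi theta
terms `e^{π i τ k²}`.
-/

open Finset Complex Real

theorem two_mul_sum_sum_Ici_mul {ι R : Type*} [Fintype ι] [LinearOrder ι]
    [LocallyFiniteOrderTop ι] [LocallyFiniteOrderBot ι] [CommSemiring R] (x : ι → R) :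
    2 * ∑ i, ∑ j ∈ Ici i, x i * x j = (∑ i, x i) ^ 2 + ∑ i, x i ^ 2 := by
  have hsplit (i : ι) : ∑ j ∈ Ici i, x i * x j + ∑ j ∈ Iic i, x i * x j
      = ∑ j, x i * x j + x i ^ 2 := by
    rw [← sum_union_inter, sq, ← sum_singleton (fun j => x i * x j) i]
    congr <;> ext j <;> simp [le_total, le_antisymm_iff, and_comm]
  have hswap : ∑ i, ∑ j ∈ Iic i, x i * x j = ∑ i, ∑ j ∈ Ici i, x i * x j :=
    (sum_comm' fun _ _ => by simp).trans <|
      sum_congr rfl fun _ _ => sum_congr rfl fun _ _ => mul_comm _ _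
  calc 2 * ∑ i, ∑ j ∈ Ici i, x i * x j
      = ∑ i, (∑ j ∈ Ici i, x i * x j + ∑ j ∈ Iic i, x i * x j) := by
        rw [sum_add_distrib, hswap, two_mul]
    _ = (∑ i, x i) ^ 2 + ∑ i, x i ^ 2 := by
        rw [sum_congr rfl fun i _ => hsplit i, sum_add_distrib, sq, sum_mul_sum]

theorem sum_sq_add_sq_sum_sub_eq_two_mul_sum_sum_Ici {K : Type*} [Field K] {n : ℕ}
    (hn : (n + 1 : K) ≠ 0) (a : K) (w : Fin n → K) :
    ∑ i, w i ^ 2 + (a + ∑ i, w i) ^ 2 - a ^ 2 / (n + 1)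
      = 2 * ∑ i, ∑ j ∈ Ici i, (a / (n + 1) + w i) * (a / (n + 1) + w j) := by
  generalize hα : a / (n + 1) = α
  obtain rfl : a = (n + 1) * α := by rw [← hα, mul_div_cancel₀ _ hn]
  rw [two_mul_sum_sum_Ici_mul]
  simp only [add_sq, sum_add_distrib, ← mul_sum, sum_const, card_univ, Fintype.card_fin,
    nsmul_eq_mul]
  field_simp
  ring

def finSnocSumEquiv {M : Type*} [AddCommGroup M] (n : ℕ) (s : M) :
    (Fin n → M) ≃ {v : Fin (n + 1) → M // ∑ i, v i = s} where
  toFun w := ⟨Fin.snoc w (s - ∑ i, w i), by simp [Fin.sum_univ_castSucc]⟩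
  invFun v := Fin.init v.1
  left_inv w := Fin.init_snoc _ _
  right_inv := by
    rintro ⟨v, rfl⟩
    ext1
    simp only [Fin.sum_univ_castSucc, Fin.init, add_sub_cancel_left, Fin.snoc_init_self]

theorem sum_sq_finSnocSumEquiv_eq (n : ℕ) (a : ℤ) (w : Fin n → ℤ) :
    ((∑ i, ((finSnocSumEquiv n (-a) w : Fin (n + 1) → ℤ) i) ^ 2 : ℤ) : ℂ) / 2
        - (a : ℂ) ^ 2 / (2 * ((n + 1 : ℕ) : ℂ))
      = (((∑ i, ∑ j ∈ Ici i, ((a : ℚ) / ((n + 1 : ℕ) : ℚ) + w i)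
          * ((a : ℚ) / ((n + 1 : ℕ) : ℚ) + w j)) : ℚ) : ℂ) := by
  have key := sum_sq_add_sq_sum_sub_eq_two_mul_sum_sum_Ici (Nat.cast_add_one_ne_zero n) (a : ℂ)
    fun i => (w i : ℂ)
  simp only [finSnocSumEquiv, Equiv.coe_fn_mk, Fin.sum_univ_castSucc, Fin.snoc_castSucc,
    Fin.snoc_last]
  push_cast
  rw [mul_comm 2, ← div_div]
  linear_combination key / 2

theorem summable_fin_pi_prod {α : Type*} {f : α → ℝ} (hf : Summable f) (hf0 : 0 ≤ f) :
    ∀ n : ℕ, Summable fun w : Fin n → α => ∏ i, f (w i)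
  | 0 => .of_finite
  | n + 1 => by
      have hprod := hf.mul_of_nonneg (summable_fin_pi_prod hf hf0 n) hf0
        fun _ => prod_nonneg fun _ _ => hf0 _
      refine (Fin.consEquiv fun _ => α).summable_iff.mp <| hprod.congr fun p => ?_
      simp [Fin.prod_univ_succ]

theorem cexp_sum_sq_eq_prod_jacobiTheta₂_term {r : ℕ} (τ c : ℂ) (v : Fin r → ℤ) :
    cexp (2 * π * I * τ * (((∑ i, v i ^ 2 : ℤ) : ℂ) / 2 - c))
      = cexp (-(2 * π * I * τ * c)) * ∏ i, jacobiTheta₂_term (v i) 0 τ := by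
  simp only [jacobiTheta₂_term, mul_zero, zero_add]
  rw [← Complex.exp_sum, ← Complex.exp_add]
  congr 1
  push_cast
  rw [mul_sub, sub_eq_neg_add, mul_div_assoc', mul_sum, sum_div]
  exact congrArg _ (sum_congr rfl fun _ _ => by ring)

theorem summable_norm_cexp_sum_sq {τ : ℂ} (hτ : 0 < τ.im) (r : ℕ) (c : ℂ) :
    Summable fun v : Fin r → ℤ =>
      ‖cexp (2 * π * I * τ * (((∑ i, v i ^ 2 : ℤ) : ℂ) / 2 - c))‖ := by
  simp only [cexp_sum_sq_eq_prod_jacobiTheta₂_term, norm_mul, norm_prod]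
  exact (summable_fin_pi_prod ((summable_jacobiTheta₂_term_iff 0 τ).mpr hτ).norm
    (fun _ => norm_nonneg _) r).mul_left _

/-- For integers `r ≥ 1`, `a`, and `τ` in the upper half plane, both of
the following series converge absolutely and are equal:
`Σ_{(k₁,…,k_r) ∈ ℤ^r, Σk_i = −a} e^{2πiτ((k₁²+⋯+k_r²)/2 − a²/(2r))}` and
`Σ_{(k₁,…,k_{r−1}) ∈ (a/r,…,a/r)+ℤ^{r−1}} e^{2πiτ Σ_{i≤j} k_i k_j}`
(for `r = 1` the second sum is the single term `1`). -/
theorem theta_blowup_identity (r : ℕ) (hr : 1 ≤ r) (a : ℤ) (τ : ℂ) (hτ : 0 < τ.im) :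
    Summable (fun v : {v : Fin r → ℤ // ∑ i, v i = -a} =>
      ‖Complex.exp (2 * (Real.pi : ℂ) * Complex.I * τ *
        (((∑ i, (v.1 i) ^ 2 : ℤ) : ℂ) / 2 - (a : ℂ) ^ 2 / (2 * (r : ℂ))))‖) ∧
    Summable (fun w : Fin (r - 1) → ℤ =>
      ‖Complex.exp (2 * (Real.pi : ℂ) * Complex.I * τ *
        (((∑ i : Fin (r - 1), ∑ j ∈ Finset.Ici i,
          ((a : ℚ) / (r : ℚ) + (w i : ℚ)) * ((a : ℚ) / (r : ℚ) + (w j : ℚ))) : ℚ) : ℂ))‖) ∧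
    (∑' v : {v : Fin r → ℤ // ∑ i, v i = -a},
      Complex.exp (2 * (Real.pi : ℂ) * Complex.I * τ *
        (((∑ i, (v.1 i) ^ 2 : ℤ) : ℂ) / 2 - (a : ℂ) ^ 2 / (2 * (r : ℂ)))))
      = ∑' w : Fin (r - 1) → ℤ,
        Complex.exp (2 * (Real.pi : ℂ) * Complex.I * τ *
          (((∑ i : Fin (r - 1), ∑ j ∈ Finset.Ici i,
            ((a : ℚ) / (r : ℚ) + (w i : ℚ)) * ((a : ℚ) / (r : ℚ) + (w j : ℚ))) : ℚ) : ℂ)) := by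
  obtain ⟨n, rfl⟩ : ∃ n, r = n + 1 := ⟨r - 1, by omega⟩
  -- `Fin (n + 1 - 1)` is `Fin n` only up to defeq, hence the closing `rfl`s
  have hlattice := summable_norm_cexp_sum_sq hτ (n + 1) ((a : ℂ) ^ 2 / (2 * ((n + 1 : ℕ) : ℂ)))
  refine ⟨hlattice.subtype _, ?_, ?_⟩
  · refine ((finSnocSumEquiv n (-a)).summable_iff.mpr (hlattice.subtype _)).congr fun w => ?_
    simp only [Function.comp_apply, sum_sq_finSnocSumEquiv_eq]
    rfl
  · rw [← (finSnocSumEquiv n (-a)).tsum_eq]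
    exact tsum_congr fun w => by rw [sum_sq_finSnocSumEquiv_eq]; rfl
end

section
/- Every element of the algebra 𝓜 can be written as a finite ℚ-linear combination Σ_{i=1}^{n} a_i · (τ ↦ Θ_{ξ_i}(τ/N)) for some theta data ξ₁,…,ξ_n, rational numbers a₁,…,a_n, and a single integer N ≥ 1. -/
open scoped BigOperators

open UpperHalfPlane in
/-- The ℚ-subalgebra `𝓜` of the ℂ-valued functions on the upper half plane generated
by the functions `τ ↦ Θ_ξ(τ/N)` for all theta data `ξ` and integers `N ≥ 1`. -/
noncomputable def MM : Subalgebra ℚ (UpperHalfPlane → ℂ) :=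
  Algebra.adjoin ℚ {f | ∃ (ξ : ThetaData) (N : ℕ), ξ.IsThetaData ∧ 1 ≤ N ∧
    f = fun τ : UpperHalfPlane => ξ.Theta ((τ : ℂ) / N)}

/-!
Theta functions of a fixed level `N` span a ℚ-vector space, and the zero lattice gives the
constant `1` at every level. Rescaling the form by `m` gives `Θ_{mξ}(z) = Θ_ξ(mz)`, and the theta
series of an orthogonal direct sum is the product of the theta series, so
`Θ_{ξ₁}(τ/N₁) Θ_{ξ₂}(τ/N₂) = Θ_{N₂ξ₁ ⊕ N₁ξ₂}(τ/(N₁N₂))`, and both constructions preserve the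
conditions on theta data. Hence combinations of levels `N₁` and `N₂` multiply to a combination of
level `N₁N₂`, a combination of level `N` is one of level `Nm` (multiply by `1`), and the union over
`N` of these spans is a subalgebra containing the generators of `𝓜`.
-/

theorem RCLike.tsum_mul_tsum {ι κ 𝕜 : Type*} [RCLike 𝕜] (f : ι → 𝕜) (g : κ → 𝕜) :
    (∑' i, f i) * ∑' k, g k = ∑' p : ι × κ, f p.1 * g p.2 := by
  -- A summable product family with non-zero factors has summable factors; in the remaining
  -- cases both sides are `0`.
  by_cases hfg : Summable fun p : ι × κ => f p.1 * g p.2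
  · by_cases hf : f = 0
    · simp [hf]
    by_cases hg : g = 0
    · simp [hg]
    obtain ⟨i, hi⟩ := Function.ne_iff.1 hf
    obtain ⟨k, hk⟩ := Function.ne_iff.1 hg
    have hfs : Summable f := by
      have h := hfg.comp_injective (Prod.mk_left_injective k)
      exact (summable_mul_right_iff hk).1 h
    have hgs : Summable g := by
      have h := hfg.comp_injective (Prod.mk_right_injective i)
      exact (summable_mul_left_iff hi).1 h
    exact hfs.tsum_mul_tsum hgs hfg
  · rw [tsum_eq_zero_of_not_summable hfg]
    by_cases hf : Summable f
    · by_cases hg : Summable g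
      · exact absurd (((summable_norm_iff (E := 𝕜)).2 hf).mul_norm
          ((summable_norm_iff (E := 𝕜)).2 hg)).of_norm hfg
      · rw [tsum_eq_zero_of_not_summable hg, mul_zero]
    · rw [tsum_eq_zero_of_not_summable hf, zero_mul]

namespace Fin

theorem range_append {α : Type*} {m n : ℕ} (u : Fin m → α) (v : Fin n → α) :
    Set.range (append u v) = Set.range u ∪ Set.range v := by
  rw [← Set.Sum.elim_range, ← append_comp_sumElim]
  exact (finSumFinEquiv.surjective.range_comp _).symm

def appendLinearEquiv (R M : Type*) [Semiring R] [AddCommMonoid M] [Module R M] (m n : ℕ) :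
    ((Fin m → M) × (Fin n → M)) ≃ₗ[R] (Fin (m + n) → M) where
  __ := appendEquiv m n
  map_add' p q := by ext i; induction i using addCases <;> simp
  map_smul' r p := by ext i; induction i using addCases <;> simp

@[simp]
theorem appendLinearEquiv_apply (R : Type*) {M : Type*} [Semiring R] [AddCommMonoid M]
    [Module R M] {m n : ℕ} (p : (Fin m → M) × (Fin n → M)) :
    appendLinearEquiv R M m n p = append p.1 p.2 := rfl

end Fin

namespace Submodule

variable {R M M' : Type*} [Semiring R] [AddCommMonoid M] [Module R M] [AddCommMonoid M']
  [Module R M']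

def prodEquivProd (S : Submodule R M) (T : Submodule R M') : S.prod T ≃ₗ[R] S × T where
  toFun v := (⟨v.1.1, v.2.1⟩, ⟨v.1.2, v.2.2⟩)
  invFun p := ⟨(p.1, p.2), p.1.2, p.2.2⟩
  map_add' _ _ := rfl
  map_smul' _ _ := rfl

theorem finrank_prod {K V W : Type*} [DivisionRing K] [AddCommGroup V] [Module K V]
    [AddCommGroup W] [Module K W] [FiniteDimensional K V] [FiniteDimensional K W]
    (S : Submodule K V) (T : Submodule K W) :
    Module.finrank K (S.prod T) = Module.finrank K S + Module.finrank K T := by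
  rw [(prodEquivProd S T).finrank_eq, Module.finrank_prod]

theorem span_range_append_inl_inr {m n b₁ b₂ : ℕ} (R : Type*) [Semiring R]
    (u : Fin b₁ → Fin m → R) (v : Fin b₂ → Fin n → R) :
    span R (Set.range (Fin.append (fun i => Fin.append (u i) 0) fun i => Fin.append 0 (v i))) =
      ((span R (Set.range u)).prod (span R (Set.range v))).map
        (Fin.appendLinearEquiv R R m n).toLinearMap := by
  have hu : (fun i => Fin.append (u i) 0) =
      Fin.appendLinearEquiv R R m n ∘ LinearMap.inl R _ _ ∘ u := rfl
  have hv : (fun i => Fin.append 0 (v i)) =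
      Fin.appendLinearEquiv R R m n ∘ LinearMap.inr R _ _ ∘ v := rfl
  rw [Fin.range_append, hu, hv, Set.range_comp, Set.range_comp, Set.range_comp, Set.range_comp,
    ← Set.image_union, ← LinearEquiv.coe_coe, span_image, LinearMap.span_inl_union_inr]

end Submodule

theorem add_pos_of_pos_of_ne_zero {V₁ V₂ R : Type*} [Zero V₁] [Zero V₂] [AddCommMonoid R]
    [PartialOrder R] [IsOrderedCancelAddMonoid R] {f₁ : V₁ → R} {f₂ : V₂ → R} (hf₁ : f₁ 0 = 0)
    (hf₂ : f₂ 0 = 0) {x₁ : V₁} {x₂ : V₂} (h₁ : x₁ ≠ 0 → 0 < f₁ x₁) (h₂ : x₂ ≠ 0 → 0 < f₂ x₂)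
    (h : (x₁, x₂) ≠ 0) : 0 < f₁ x₁ + f₂ x₂ := by
  by_cases hx₁ : x₁ = 0
  · have hx₂ : x₂ ≠ 0 := fun hx₂ => h (by simp [hx₁, hx₂])
    simpa [hx₁, hf₁] using h₂ hx₂
  by_cases hx₂ : x₂ = 0
  · simpa [hx₂, hf₂] using h₁ hx₁
  exact add_pos (h₁ hx₁) (h₂ hx₂)

def Matrix.finBlockDiagonal {α : Type*} [Zero α] {n₁ n₂ : ℕ} (A : Matrix (Fin n₁) (Fin n₁) α)
    (B : Matrix (Fin n₂) (Fin n₂) α) : Matrix (Fin (n₁ + n₂)) (Fin (n₁ + n₂)) α :=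
  Matrix.reindex finSumFinEquiv finSumFinEquiv (Matrix.fromBlocks A 0 0 B)

theorem Matrix.IsSymm.finBlockDiagonal {α : Type*} [Zero α] {n₁ n₂ : ℕ}
    {A : Matrix (Fin n₁) (Fin n₁) α} {B : Matrix (Fin n₂) (Fin n₂) α} (hA : A.IsSymm)
    (hB : B.IsSymm) : (Matrix.finBlockDiagonal A B).IsSymm :=
  (hA.fromBlocks Matrix.transpose_zero hB).reindex _

theorem sgn_mul_of_pos {m : ℚ} (hm : 0 < m) (x : ℚ) : sgn (m * x) = sgn x := by
  simp only [sgn, mul_pos_iff_of_pos_left hm, Rat.mul_neg_iff_of_pos_left hm]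

section IntPair

variable {n : ℕ} (M : Matrix (Fin n) (Fin n) ℤ)

@[simp]
theorem intPair_zero_left (y : Fin n → ℚ) : intPair M 0 y = 0 := by simp [intPair]

@[simp]
theorem intPair_zero_right (x : Fin n → ℚ) : intPair M x 0 = 0 := by simp [intPair]

theorem intPair_smul_left (a : ℚ) (x y : Fin n → ℚ) :
    intPair M (a • x) y = a * intPair M x y := by
  simp only [intPair, Pi.smul_apply, smul_eq_mul, Finset.mul_sum]
  exact Finset.sum_congr rfl fun _ _ => Finset.sum_congr rfl fun _ _ => by ring

theorem intPair_smul_matrix (m : ℤ) (x y : Fin n → ℚ) :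
    intPair (m • M) x y = m * intPair M x y := by
  simp only [intPair, Matrix.smul_apply, smul_eq_mul, Int.cast_mul, Finset.mul_sum]
  exact Finset.sum_congr rfl fun _ _ => Finset.sum_congr rfl fun _ _ => by ring

theorem intPair_finBlockDiagonal {n₁ n₂ : ℕ} (A : Matrix (Fin n₁) (Fin n₁) ℤ)
    (B : Matrix (Fin n₂) (Fin n₂) ℤ) (x₁ y₁ : Fin n₁ → ℚ) (x₂ y₂ : Fin n₂ → ℚ) :
    intPair (Matrix.finBlockDiagonal A B) (Fin.append x₁ x₂) (Fin.append y₁ y₂) =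
      intPair A x₁ y₁ + intPair B x₂ y₂ := by
  simp [intPair, Matrix.finBlockDiagonal, Fin.sum_univ_add]

variable {n₁ n₂ : ℕ} {A : Matrix (Fin n₁) (Fin n₁) ℤ} {B : Matrix (Fin n₂) (Fin n₂) ℤ}

theorem intPair_finBlockDiagonal_nondegenerate (hA : ∀ x, (∀ y, intPair A x y = 0) → x = 0)
    (hB : ∀ x, (∀ y, intPair B x y = 0) → x = 0) :
    ∀ x, (∀ y, intPair (Matrix.finBlockDiagonal A B) x y = 0) → x = 0 := by
  intro x hx
  obtain ⟨x₁, x₂, rfl⟩ : ∃ x₁ x₂, x = Fin.append x₁ x₂ := ⟨_, _, Fin.append_castAdd_natAdd.symm⟩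
  have hx₁ : x₁ = 0 := hA x₁ fun y => by
    simpa [intPair_finBlockDiagonal] using hx (Fin.append y 0)
  have hx₂ : x₂ = 0 := hB x₂ fun y => by
    simpa [intPair_finBlockDiagonal] using hx (Fin.append 0 y)
  rw [hx₁, hx₂]
  exact (Fin.appendLinearEquiv ℚ ℚ n₁ n₂).map_zero

theorem intPair_finBlockDiagonal_pos_of_mem_map_prod {S₁ : Submodule ℚ (Fin n₁ → ℚ)}
    {S₂ : Submodule ℚ (Fin n₂ → ℚ)} (h₁ : ∀ v ∈ S₁, v ≠ 0 → 0 < intPair A v v)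
    (h₂ : ∀ v ∈ S₂, v ≠ 0 → 0 < intPair B v v) :
    ∀ v ∈ (S₁.prod S₂).map (Fin.appendLinearEquiv ℚ ℚ n₁ n₂).toLinearMap, v ≠ 0 →
      0 < intPair (Matrix.finBlockDiagonal A B) v v := by
  rintro _ ⟨p, ⟨hp₁, hp₂⟩, rfl⟩ hp
  have h := add_pos_of_pos_of_ne_zero (f₁ := fun v => intPair A v v)
    (f₂ := fun v => intPair B v v) (intPair_zero_left _ _) (intPair_zero_left _ _)
    (h₁ _ hp₁) (h₂ _ hp₂) ((Fin.appendLinearEquiv ℚ ℚ n₁ n₂).map_ne_zero_iff.1 hp)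
  simpa [intPair_finBlockDiagonal] using h

theorem intPair_finBlockDiagonal_neg_of_mem_map_prod {S₁ : Submodule ℚ (Fin n₁ → ℚ)}
    {S₂ : Submodule ℚ (Fin n₂ → ℚ)} (h₁ : ∀ v ∈ S₁, v ≠ 0 → intPair A v v < 0)
    (h₂ : ∀ v ∈ S₂, v ≠ 0 → intPair B v v < 0) :
    ∀ v ∈ (S₁.prod S₂).map (Fin.appendLinearEquiv ℚ ℚ n₁ n₂).toLinearMap, v ≠ 0 →
      intPair (Matrix.finBlockDiagonal A B) v v < 0 := by
  rintro _ ⟨p, ⟨hp₁, hp₂⟩, rfl⟩ hp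
  have h := add_pos_of_pos_of_ne_zero (f₁ := fun v => -intPair A v v)
    (f₂ := fun v => -intPair B v v) (by simp) (by simp)
    (fun h => neg_pos.2 (h₁ _ hp₁ h)) (fun h => neg_pos.2 (h₂ _ hp₂ h))
    ((Fin.appendLinearEquiv ℚ ℚ n₁ n₂).map_ne_zero_iff.1 hp)
  simp only [LinearEquiv.coe_coe, Fin.appendLinearEquiv_apply, intPair_finBlockDiagonal]
  linarith

end IntPair

namespace ThetaData

def empty : ThetaData where
  n := 0
  b := 0
  k := 0
  M := 0
  c := Fin.elim0
  c' := Fin.elim0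
  nubar := 0
  alpha := Fin.elim0

instance : IsEmpty (Fin empty.n) := inferInstanceAs (IsEmpty (Fin 0))

instance : IsEmpty (Fin empty.b) := inferInstanceAs (IsEmpty (Fin 0))

instance : IsEmpty (Fin empty.k) := inferInstanceAs (IsEmpty (Fin 0))

theorem isThetaData_empty : empty.IsThetaData := by
  refine ⟨le_rfl, Matrix.IsSymm.ext fun i => i.elim0, fun _ _ => Subsingleton.elim _ _,
    ⟨⊤, ?_, fun v _ hv => absurd (Subsingleton.elim v 0) hv⟩, ?_,
    fun v _ hv => absurd (Subsingleton.elim v 0) hv, fun i => i.elim0, fun i => i.elim0,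
    fun i => i.elim0, fun i => i.elim0⟩
  · rw [finrank_top, Module.finrank_zero_of_subsingleton]; rfl
  · rw [Set.range_eq_empty, Submodule.span_empty, finrank_bot]; rfl

theorem Theta_empty (z : ℂ) : empty.Theta z = 1 := by
  rw [Theta, tsum_eq_single 0 fun g hg => absurd (Subsingleton.elim g 0) hg]
  simp [term, intPair, Finset.univ_eq_empty]

/-- The `α_j` are divided by `m` so that the factors `B(α_j, ν)` are unchanged. The definition is
reducible so that `Fin (ξ.scale m).n` and `Fin ξ.n` are identified by `simp` and `rw`. -/
abbrev scale (ξ : ThetaData) (m : ℕ) : ThetaData :=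
  { ξ with M := (m : ℤ) • ξ.M, alpha := fun j => (m : ℚ)⁻¹ • ξ.alpha j }

variable {ξ : ThetaData} {m : ℕ}

theorem intPair_scale (x y : Fin ξ.n → ℚ) :
    intPair (ξ.scale m).M x y = m * intPair ξ.M x y := by
  rw [intPair_smul_matrix, Int.cast_natCast]

theorem term_scale (hm : 0 < m) (z : ℂ) (g : Fin ξ.n → ℤ) :
    (ξ.scale m).term z g = ξ.term (m * z) g := by
  have hm' : (0 : ℚ) < m := by exact_mod_cast hm
  have hnu : (ξ.scale m).nu g = ξ.nu g := rfl
  simp only [term, hnu, intPair_smul_matrix, Int.cast_natCast, intPair_smul_left,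
    sgn_mul_of_pos hm', inv_mul_cancel_left₀ hm'.ne']
  push_cast
  congr 2
  ring

theorem Theta_scale (hm : 0 < m) (z : ℂ) : (ξ.scale m).Theta z = ξ.Theta (m * z) :=
  tsum_congr fun g => term_scale (ξ := ξ) hm z g

theorem IsThetaData.scale (hξ : ξ.IsThetaData) (hm : 0 < m) : (ξ.scale m).IsThetaData := by
  have hm' : (0 : ℚ) < m := by exact_mod_cast hm
  obtain ⟨hb, hsymm, hnondeg, ⟨P, hPrank, hPpos⟩, hcrank, hcneg, hcc', hc'c', hcc'neg, hc'nu⟩ :=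
    hξ
  refine ⟨hb, ?_, fun x hx => hnondeg x fun y => ?_, ⟨P, hPrank, fun v hv hv0 => ?_⟩,
    hcrank, fun v hv hv0 => ?_, fun i j hij => ?_, fun i j => ?_, fun i => ?_, fun i g => ?_⟩
  · exact hsymm.smul (m : ℤ)
  · have h := hx y
    rw [intPair_scale] at h
    exact (mul_eq_zero.1 h).resolve_left hm'.ne'
  · rw [intPair_scale]
    exact mul_pos hm' (hPpos v hv hv0)
  · rw [intPair_scale]
    exact mul_neg_of_pos_of_neg hm' (hcneg v hv hv0)
  · rw [intPair_scale, hcc' i j hij, mul_zero]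
  · rw [intPair_scale, hc'c' i j, mul_zero]
  · rw [intPair_scale]
    exact mul_neg_of_pos_of_neg hm' (hcc'neg i)
  · rw [intPair_scale]
    exact mul_ne_zero hm'.ne' (hc'nu i g)

abbrev directSum (ξ₁ ξ₂ : ThetaData) : ThetaData where
  n := ξ₁.n + ξ₂.n
  b := ξ₁.b + ξ₂.b
  k := ξ₁.k + ξ₂.k
  M := Matrix.finBlockDiagonal ξ₁.M ξ₂.M
  c := Fin.append (fun i => Fin.append (ξ₁.c i) 0) fun i => Fin.append 0 (ξ₂.c i)
  c' := Fin.append (fun i => Fin.append (ξ₁.c' i) 0) fun i => Fin.append 0 (ξ₂.c' i)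
  nubar := Fin.append ξ₁.nubar ξ₂.nubar
  alpha := Fin.append (fun j => Fin.append (ξ₁.alpha j) 0) fun j => Fin.append 0 (ξ₂.alpha j)

variable {ξ₁ ξ₂ : ThetaData}

theorem nu_directSum (g₁ : Fin ξ₁.n → ℤ) (g₂ : Fin ξ₂.n → ℤ) :
    (ξ₁.directSum ξ₂).nu (Fin.append g₁ g₂) = Fin.append (ξ₁.nu g₁) (ξ₂.nu g₂) := by
  ext t
  induction t using Fin.addCases <;> simp [nu]

theorem term_directSum (z : ℂ) (g₁ : Fin ξ₁.n → ℤ) (g₂ : Fin ξ₂.n → ℤ) :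
    (ξ₁.directSum ξ₂).term z (Fin.append g₁ g₂) = ξ₁.term z g₁ * ξ₂.term z g₂ := by
  simp only [term, nu_directSum, Fin.prod_univ_add, Fin.append_left, Fin.append_right,
    intPair_finBlockDiagonal, intPair_zero_left, add_zero, zero_add]
  rw [add_div, Rat.cast_add, mul_add, add_mul, Complex.exp_add]
  push_cast
  ring

theorem Theta_directSum (z : ℂ) : (ξ₁.directSum ξ₂).Theta z = ξ₁.Theta z * ξ₂.Theta z := by
  rw [Theta, Theta, Theta, RCLike.tsum_mul_tsum, ← (Fin.appendEquiv ξ₁.n ξ₂.n).tsum_eq]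
  exact tsum_congr fun p => term_directSum z p.1 p.2

theorem IsThetaData.directSum (h₁ : ξ₁.IsThetaData) (h₂ : ξ₂.IsThetaData) :
    (ξ₁.directSum ξ₂).IsThetaData := by
  obtain ⟨hb₁, hsymm₁, hnondeg₁, ⟨P₁, hP₁rank, hP₁pos⟩, hc₁rank, hc₁neg, hcc'₁, hc'c'₁, hcc'neg₁,
    hc'nu₁⟩ := h₁
  obtain ⟨hb₂, hsymm₂, hnondeg₂, ⟨P₂, hP₂rank, hP₂pos⟩, hc₂rank, hc₂neg, hcc'₂, hc'c'₂, hcc'neg₂,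
    hc'nu₂⟩ := h₂
  have hspan : Submodule.span ℚ (Set.range (ξ₁.directSum ξ₂).c) =
      ((Submodule.span ℚ (Set.range ξ₁.c)).prod (Submodule.span ℚ (Set.range ξ₂.c))).map
        (Fin.appendLinearEquiv ℚ ℚ ξ₁.n ξ₂.n).toLinearMap :=
    Submodule.span_range_append_inl_inr ℚ ξ₁.c ξ₂.c
  refine ⟨show 2 * (ξ₁.b + ξ₂.b) ≤ ξ₁.n + ξ₂.n by omega, hsymm₁.finBlockDiagonal hsymm₂,
    intPair_finBlockDiagonal_nondegenerate hnondeg₁ hnondeg₂,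
    ⟨_, ?_, intPair_finBlockDiagonal_pos_of_mem_map_prod hP₁pos hP₂pos⟩, ?_, ?_, ?_, ?_, ?_, ?_⟩
  · rw [LinearEquiv.finrank_map_eq, Submodule.finrank_prod, hP₁rank, hP₂rank]
    change _ = ξ₁.n + ξ₂.n - (ξ₁.b + ξ₂.b)
    omega
  · rw [hspan, LinearEquiv.finrank_map_eq, Submodule.finrank_prod, hc₁rank, hc₂rank]
  · rw [hspan]
    exact intPair_finBlockDiagonal_neg_of_mem_map_prod hc₁neg hc₂neg
  · intro i j hij
    induction i using Fin.addCases <;> induction j using Fin.addCases <;>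
      simp [intPair_finBlockDiagonal] at hij ⊢
    exacts [hcc'₁ _ _ hij, hcc'₂ _ _ hij]
  · intro i j
    induction i using Fin.addCases <;> induction j using Fin.addCases <;>
      simp [intPair_finBlockDiagonal, hc'c'₁, hc'c'₂]
  · intro i
    induction i using Fin.addCases <;> simp [intPair_finBlockDiagonal, hcc'neg₁, hcc'neg₂]
  · intro i g
    obtain ⟨g₁, g₂, rfl⟩ : ∃ g₁ g₂, g = Fin.append g₁ g₂ := ⟨_, _, Fin.append_castAdd_natAdd.symm⟩
    induction i using Fin.addCases <;>
      simp [nu_directSum, intPair_finBlockDiagonal, hc'nu₁, hc'nu₂]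

end ThetaData

open scoped Pointwise

def thetaAtLevel (N : ℕ) : Set (UpperHalfPlane → ℂ) :=
  {f | ∃ ξ : ThetaData, ξ.IsThetaData ∧ f = fun τ : UpperHalfPlane => ξ.Theta ((τ : ℂ) / N)}

theorem one_mem_thetaAtLevel (N : ℕ) : 1 ∈ thetaAtLevel N :=
  ⟨ThetaData.empty, ThetaData.isThetaData_empty, funext fun _ => (ThetaData.Theta_empty _).symm⟩

theorem thetaAtLevel_mul_subset {N₁ N₂ : ℕ} (hN₁ : 0 < N₁) (hN₂ : 0 < N₂) :
    thetaAtLevel N₁ * thetaAtLevel N₂ ⊆ thetaAtLevel (N₁ * N₂) := by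
  rintro _ ⟨_, ⟨ξ₁, hξ₁, rfl⟩, _, ⟨ξ₂, hξ₂, rfl⟩, rfl⟩
  refine ⟨(ξ₁.scale N₂).directSum (ξ₂.scale N₁), (hξ₁.scale hN₂).directSum (hξ₂.scale hN₁),
    funext fun τ => ?_⟩
  dsimp only
  rw [Pi.mul_apply, ThetaData.Theta_directSum, ThetaData.Theta_scale hN₂,
    ThetaData.Theta_scale hN₁]
  have h₁ : (N₁ : ℂ) ≠ 0 := by exact_mod_cast hN₁.ne'
  have h₂ : (N₂ : ℂ) ≠ 0 := by exact_mod_cast hN₂.ne'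
  congr 2 <;> push_cast <;> field_simp

theorem thetaAtLevel_subset_mul {N m : ℕ} (hN : 0 < N) (hm : 0 < m) :
    thetaAtLevel N ⊆ thetaAtLevel (N * m) := fun f hf =>
  mul_one f ▸ thetaAtLevel_mul_subset hN hm (Set.mul_mem_mul hf (one_mem_thetaAtLevel m))

def thetaCombinations : Subalgebra ℚ (UpperHalfPlane → ℂ) where
  carrier := {f | ∃ N, 0 < N ∧ f ∈ Submodule.span ℚ (thetaAtLevel N)}
  mul_mem' := by
    rintro f₁ f₂ ⟨N₁, hN₁, hf₁⟩ ⟨N₂, hN₂, hf₂⟩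
    refine ⟨N₁ * N₂, Nat.mul_pos hN₁ hN₂, Submodule.span_mono (thetaAtLevel_mul_subset hN₁ hN₂) ?_⟩
    rw [← Submodule.span_mul_span]
    exact Submodule.mul_mem_mul hf₁ hf₂
  add_mem' := by
    rintro f₁ f₂ ⟨N₁, hN₁, hf₁⟩ ⟨N₂, hN₂, hf₂⟩
    refine ⟨N₁ * N₂, Nat.mul_pos hN₁ hN₂, add_mem ?_ ?_⟩
    · exact Submodule.span_mono (thetaAtLevel_subset_mul hN₁ hN₂) hf₁
    · rw [mul_comm]
      exact Submodule.span_mono (thetaAtLevel_subset_mul hN₂ hN₁) hf₂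
  algebraMap_mem' r := ⟨1, one_pos, by
    rw [Algebra.algebraMap_eq_smul_one]
    exact Submodule.smul_mem _ r (Submodule.subset_span (one_mem_thetaAtLevel 1))⟩

theorem MM_le_thetaCombinations : MM ≤ thetaCombinations :=
  Algebra.adjoin_le fun _ ⟨ξ, N, hξ, hN, hf⟩ => ⟨N, hN, Submodule.subset_span ⟨ξ, hξ, hf⟩⟩

/-- Every element of `𝓜` is a finite ℚ-linear combination
`Σ_{i=1}^{n} a_i · (τ ↦ Θ_{ξ_i}(τ/N))` for some theta data `ξ₁,…,ξ_n`, rational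
numbers `a₁,…,a_n` and a single integer `N ≥ 1`. -/
theorem mem_MM_eq_linear_combination (f : UpperHalfPlane → ℂ) (hf : f ∈ MM) :
    ∃ (n N : ℕ) (ξs : Fin n → ThetaData) (a : Fin n → ℚ),
      (∀ i, (ξs i).IsThetaData) ∧ 1 ≤ N ∧
      f = fun τ : UpperHalfPlane => ∑ i, (a i : ℂ) * (ξs i).Theta ((τ : ℂ) / N) := by
  obtain ⟨N, hN, hf⟩ := MM_le_thetaCombinations hf
  obtain ⟨n, a, g, rfl⟩ := Submodule.mem_span_set'.1 hf
  choose ξs hξs hg using fun i => (g i).2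
  refine ⟨n, N, ξs, a, hξs, hN, funext fun τ => ?_⟩
  simp [hg, Finset.sum_apply, Rat.smul_def]
end

section
/- Let m ≥ 2, let r₁,…,r_m be positive integers with r = r₁ + ⋯ + r_m, let β̄₁,…,β̄_m ∈ ℤ² and β ∈ ℤ², and set β̄ = β̄₁ + ⋯ + β̄_m and ν̄_i = β̄_i/r_i − β̄_{i+1}/r_{i+1} ∈ ℚ² for 1 ≤ i ≤ m−1. Let ν_i ∈ ν̄_i + ℤ² for 1 ≤ i ≤ m−1. Then the following are equivalent: (a) there exist u₁,…,u_m ∈ ℤ² such that the elements β_i := β̄_i + r_i u_i satisfy β₁ + ⋯ + β_m = β and β_i/r_i − β_{i+1}/r_{i+1} = ν_i for all 1 ≤ i ≤ m−1; (b) β − β̄ + Σ_{i=1}^{m−1} (Σ_{j=i+1}^{m} r_j)(ν_i − ν̄_i) ∈ r·ℤ². -/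
open scoped BigOperators

/-- The natural inclusion `ℤ² ⊆ ℚ²`. -/
def castPair (p : ℤ × ℤ) : ℚ × ℚ := ((p.1 : ℚ), (p.2 : ℚ))

lemma castPair_add (a b : ℤ × ℤ) : castPair (a + b) = castPair a + castPair b := by
  simp [castPair, Prod.ext_iff]

lemma castPair_sub (a b : ℤ × ℤ) : castPair (a - b) = castPair a - castPair b := by
  simp [castPair, Prod.ext_iff]

lemma castPair_smul (z : ℤ) (a : ℤ × ℤ) : castPair (z • a) = (z : ℚ) • castPair a := by
  simp [castPair, Prod.ext_iff]

lemma castPair_inj {a b : ℤ × ℤ} (h : castPair a = castPair b) : a = b := by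
  simp [castPair, Prod.ext_iff] at h ⊢
  exact_mod_cast h

lemma castPair_sum {s : Finset ℕ} {f : ℕ → ℤ × ℤ} :
    castPair (∑ i ∈ s, f i) = ∑ i ∈ s, castPair (f i) := by
  induction s using Finset.cons_induction with
  | empty => simp [castPair]
  | cons a s ha ih => rw [Finset.cons_eq_insert, Finset.sum_insert ha, Finset.sum_insert ha, castPair_add, ih]

lemma sum_swap_key (m : ℕ) (r : ℕ → ℤ) (v : ℕ → ℤ × ℤ) :
    ∑ i ∈ Finset.range m, r i • ∑ j ∈ Finset.range i, v j
      = ∑ j ∈ Finset.range m, (∑ i ∈ Finset.Ico (j + 1) m, r i) • v j := by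
  induction m with
  | zero => simp
  | succ n ih =>
    rw [Finset.sum_range_succ, ih, Finset.sum_range_succ, Finset.smul_sum]
    have h1 : ∀ j ∈ Finset.range n,
        (∑ i ∈ Finset.Ico (j + 1) (n + 1), r i) • v j
          = (∑ i ∈ Finset.Ico (j + 1) n, r i) • v j + r n • v j := by
      intro j hj
      rw [Finset.sum_Ico_succ_top (by simpa using Nat.succ_le_of_lt (Finset.mem_range.mp hj)), add_smul]
    rw [Finset.sum_congr rfl h1, Finset.sum_add_distrib]
    simp only [Finset.Ico_self, Finset.sum_empty, zero_smul, add_zero]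

/-- 0-based indexing `i = 0,…,m−1`: Let `m ≥ 2`, `r_i ≥ 1` integers
with `r = Σ r_i`, `β̄_i ∈ ℤ²`, `β ∈ ℤ²`, `β̄ = Σ β̄_i`, and
`ν̄_i = β̄_i/r_i − β̄_{i+1}/r_{i+1} ∈ ℚ²` for `i < m−1`.  Let `ν_i ∈ ν̄_i + ℤ²`.
Then the following are equivalent:
(a) there exist `u_i ∈ ℤ²` such that `β_i := β̄_i + r_i u_i` satisfy `Σ β_i = β` and
`β_i/r_i − β_{i+1}/r_{i+1} = ν_i` for all `i < m−1`;
(b) `β − β̄ + Σ_{i<m−1} (Σ_{j=i+1}^{m−1} r_j)(ν_i − ν̄_i) ∈ r·ℤ²`. -/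
theorem lattice_solvability_criterion (m : ℕ) (hm : 2 ≤ m)
    (r : ℕ → ℤ) (hr : ∀ i < m, 1 ≤ r i)
    (β' : ℕ → ℤ × ℤ) (β : ℤ × ℤ) (ν : ℕ → ℚ × ℚ)
    (hν : ∀ i < m - 1, ∃ u : ℤ × ℤ,
      ν i = ((r i : ℚ))⁻¹ • castPair (β' i) - ((r (i + 1) : ℚ))⁻¹ • castPair (β' (i + 1))
        + castPair u) :
    (∃ u : ℕ → ℤ × ℤ,
        (∑ i ∈ Finset.range m, (β' i + r i • u i)) = β ∧
        ∀ i < m - 1,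
          ((r i : ℚ))⁻¹ • castPair (β' i + r i • u i)
            - ((r (i + 1) : ℚ))⁻¹ • castPair (β' (i + 1) + r (i + 1) • u (i + 1)) = ν i)
      ↔
    (∃ w : ℤ × ℤ,
        castPair β - castPair (∑ i ∈ Finset.range m, β' i)
          + ∑ i ∈ Finset.range (m - 1),
              (((∑ j ∈ Finset.Ico (i + 1) m, r j : ℤ) : ℚ)) •
                (ν i - (((r i : ℚ))⁻¹ • castPair (β' i)
                  - ((r (i + 1) : ℚ))⁻¹ • castPair (β' (i + 1))))
          = (((∑ i ∈ Finset.range m, r i : ℤ) : ℚ)) • castPair w) := by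
  classical
  have hr0 : ∀ i < m, (r i : ℚ) ≠ 0 := fun i hi => by
    have := hr i hi; exact_mod_cast (by omega : r i ≠ 0)
  -- choose v
  set v : ℕ → ℤ × ℤ := fun i => if h : i < m - 1 then (hν i h).choose else 0 with hvdef
  have hv : ∀ i, ∀ h : i < m - 1,
      ν i = ((r i : ℚ))⁻¹ • castPair (β' i) - ((r (i + 1) : ℚ))⁻¹ • castPair (β' (i + 1))
        + castPair (v i) := by
    intro i h
    simp only [hvdef, dif_pos h]
    exact (hν i h).choose_spec
  -- expansion lemma
  have hexp : ∀ i < m, ∀ u : ℤ × ℤ,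
      ((r i : ℚ))⁻¹ • castPair (β' i + r i • u)
        = ((r i : ℚ))⁻¹ • castPair (β' i) + castPair u := by
    intro i hi u
    rw [castPair_add, castPair_smul, smul_add, smul_smul, inv_mul_cancel₀ (hr0 i hi), one_smul]
  -- range (m-1) vs range m
  have hrangeEq : ∀ w : ℕ → ℤ × ℤ,
      ∑ j ∈ Finset.range m, (∑ t ∈ Finset.Ico (j + 1) m, r t) • w j = ∑ j ∈ Finset.range (m - 1), (∑ t ∈ Finset.Ico (j + 1) m, r t) • w j := by
    intro w
    have h1 : ∑ j ∈ Finset.range ((m - 1) + 1), (∑ t ∈ Finset.Ico (j + 1) m, r t) • w j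
        = ∑ j ∈ Finset.range (m - 1), (∑ t ∈ Finset.Ico (j + 1) m, r t) • w j + (∑ t ∈ Finset.Ico ((m - 1) + 1) m, r t) • w (m - 1) :=
      Finset.sum_range_succ _ _
    rw [Nat.sub_add_cancel (by omega)] at h1
    rw [h1, Finset.Ico_self, Finset.sum_empty, zero_smul, add_zero]
  constructor
  · rintro ⟨u, hsum, hdiff⟩
    have hstep : ∀ i < m - 1, u i - u (i + 1) = v i := by
      intro i hi
      have h1 := hdiff i hi
      rw [hexp i (by omega) (u i), hexp (i + 1) (by omega) (u (i + 1)), hv i hi] at h1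
      apply castPair_inj
      rw [castPair_sub]
      linear_combination h1
    have hu : ∀ i, i < m → u i = u 0 - ∑ j ∈ Finset.range i, v j := by
      intro i
      induction i with
      | zero => simp
      | succ n ih =>
        intro h
        rw [Finset.sum_range_succ]
        linear_combination ih (by omega) - hstep n (by omega)
    have hsum' : ∑ i ∈ Finset.range m, r i • u i = β - ∑ i ∈ Finset.range m, β' i := by
      rw [Finset.sum_add_distrib] at hsum
      linear_combination hsum
    have hmain : β - ∑ i ∈ Finset.range m, β' i + ∑ j ∈ Finset.range (m - 1), (∑ t ∈ Finset.Ico (j + 1) m, r t) • v j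
        = (∑ i ∈ Finset.range m, r i) • u 0 := by
      have h2 : ∑ i ∈ Finset.range m, r i • u i
          = ∑ i ∈ Finset.range m, r i • (u 0 - ∑ j ∈ Finset.range i, v j) :=
        Finset.sum_congr rfl fun i hi => by rw [hu i (Finset.mem_range.mp hi)]
      rw [h2] at hsum'
      simp only [smul_sub, Finset.sum_sub_distrib, ← Finset.sum_smul, sum_swap_key m r v] at hsum'
      rw [← hrangeEq v]
      linear_combination -hsum'
    refine ⟨u 0, ?_⟩
    have h3 : ∀ i ∈ Finset.range (m - 1),
        ((∑ t ∈ Finset.Ico (i + 1) m, r t : ℤ) : ℚ) • (ν i - (((r i : ℚ))⁻¹ • castPair (β' i)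
            - ((r (i + 1) : ℚ))⁻¹ • castPair (β' (i + 1))))
          = castPair ((∑ t ∈ Finset.Ico (i + 1) m, r t) • v i) := by
      intro i hi
      rw [castPair_smul]
      congr 1
      linear_combination hv i (Finset.mem_range.mp hi)
    rw [Finset.sum_congr rfl h3, ← castPair_sum, ← castPair_sub, ← castPair_add, ← castPair_smul]
    exact congrArg castPair hmain
  · rintro ⟨w, hb⟩
    have h3 : ∀ i ∈ Finset.range (m - 1),
        ((∑ t ∈ Finset.Ico (i + 1) m, r t : ℤ) : ℚ) • (ν i - (((r i : ℚ))⁻¹ • castPair (β' i)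
            - ((r (i + 1) : ℚ))⁻¹ • castPair (β' (i + 1))))
          = castPair ((∑ t ∈ Finset.Ico (i + 1) m, r t) • v i) := by
      intro i hi
      rw [castPair_smul]
      congr 1
      linear_combination hv i (Finset.mem_range.mp hi)
    rw [Finset.sum_congr rfl h3, ← castPair_sum, ← castPair_sub, ← castPair_add,
      ← castPair_smul] at hb
    have hE : β - ∑ i ∈ Finset.range m, β' i + ∑ j ∈ Finset.range (m - 1), (∑ t ∈ Finset.Ico (j + 1) m, r t) • v j
        = (∑ i ∈ Finset.range m, r i) • w := castPair_inj hb
    refine ⟨fun i => w - ∑ j ∈ Finset.range i, v j, ?_, ?_⟩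
    · rw [Finset.sum_add_distrib]
      have h4 : ∑ i ∈ Finset.range m, r i • (w - ∑ j ∈ Finset.range i, v j)
          = (∑ i ∈ Finset.range m, r i) • w - ∑ j ∈ Finset.range (m - 1), (∑ t ∈ Finset.Ico (j + 1) m, r t) • v j := by
        simp only [smul_sub, Finset.sum_sub_distrib, ← Finset.sum_smul, sum_swap_key m r v]
        rw [hrangeEq v]
      rw [h4]
      linear_combination -hE
    · intro i hi
      rw [hexp i (by omega) _, hexp (i + 1) (by omega) _, hv i hi]
      have h5 : castPair (w - ∑ j ∈ Finset.range i, v j)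
          - castPair (w - ∑ j ∈ Finset.range (i + 1), v j) = castPair (v i) := by
        rw [← castPair_sub]
        congr 1
        rw [Finset.sum_range_succ]
        ring
      linear_combination h5
end
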